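/- arXiv:2106.01392 — 15 statements merged into one kernel-verified Lean document; each statement's English description precedes it below -/
import Mathlib

section
/- Along an A₁⁽¹⁾ X-variable sequence the two exchange invariants are conserved: if r is a sequence of nonzero elements of F satisfying r(j+1) = (1 + x₁(j))·r(j) for all j ∈ ℕ, then for every j ∈ ℕ one has r(j)·(1 + x₁(j) + x₁(j)·x₂(j)) = r(0)·(1 + x₁(0) + x₁(0)·x₂(0)) and r(j)²·x₁(j)·x₂(j) = r(0)²·x₁(0)·x₂(0). -/
section ExchangeStep

variable {R : Type*} [CommRing R] {a b a' b' s : R}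

/- `a, b` are `x₁ j, x₂ j`, `a', b'` are `x₁ (j + 1), x₂ (j + 1)`, and `s = r j`, so that
`r (j + 1) = (1 + a) * s`. -/

theorem exchange_invariant_quadratic_step (h₁ : a' * (1 + a) ^ 2 = b * a ^ 2) (h₂ : b' * a = 1) :
    ((1 + a) * s) ^ 2 * a' * b' = s ^ 2 * a * b := by
  linear_combination s ^ 2 * b' * h₁ + s ^ 2 * a * b * h₂

-- Only `(1 + a)` times this identity is a polynomial consequence of `h₁` and `h₂`.
theorem exchange_invariant_linear_step [IsDomain R] (ha : 1 + a ≠ 0)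
    (h₁ : a' * (1 + a) ^ 2 = b * a ^ 2) (h₂ : b' * a = 1) :
    (1 + a) * s * (1 + a' + a' * b') = s * (1 + a + a * b) := by
  refine mul_left_cancel₀ ha ?_
  linear_combination s * (1 + b') * h₁ + s * a * b * h₂

end ExchangeStep

theorem a11_exchange_invariants_general {F : Type*} [Field F] (x₁ x₂ : ℕ → F)
    (hx₁' : ∀ j, 1 + x₁ j ≠ 0)
    (hmut₁ : ∀ j, x₁ (j + 1) * (1 + x₁ j) ^ 2 = x₂ j * (x₁ j) ^ 2)
    (hmut₂ : ∀ j, x₂ (j + 1) * x₁ j = 1)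
    (r : ℕ → F)
    (hrec : ∀ j, r (j + 1) = (1 + x₁ j) * r j) :
    ∀ j, r j * (1 + x₁ j + x₁ j * x₂ j) = r 0 * (1 + x₁ 0 + x₁ 0 * x₂ 0) ∧
      (r j) ^ 2 * x₁ j * x₂ j = (r 0) ^ 2 * x₁ 0 * x₂ 0 := by
  intro j
  induction j with
  | zero => exact ⟨rfl, rfl⟩
  | succ j ih =>
    rw [hrec j]
    exact ⟨(exchange_invariant_linear_step (hx₁' j) (hmut₁ j) (hmut₂ j)).trans ih.1,
      (exchange_invariant_quadratic_step (hmut₁ j) (hmut₂ j)).trans ih.2⟩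

/-- Along an `A₁⁽¹⁾` X-variable sequence the two exchange invariants are conserved. -/
theorem a11_exchange_invariants {F : Type*} [Field F] (x₁ x₂ : ℕ → F)
    (hx₁ : ∀ j, x₁ j ≠ 0) (hx₁' : ∀ j, 1 + x₁ j ≠ 0)
    (hmut₁ : ∀ j, x₁ (j + 1) * (1 + x₁ j) ^ 2 = x₂ j * (x₁ j) ^ 2)
    (hmut₂ : ∀ j, x₂ (j + 1) * x₁ j = 1)
    (r : ℕ → F) (hr : ∀ j, r j ≠ 0)
    (hrec : ∀ j, r (j + 1) = (1 + x₁ j) * r j) :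
    ∀ j, r j * (1 + x₁ j + x₁ j * x₂ j) = r 0 * (1 + x₁ 0 + x₁ 0 * x₂ 0) ∧
      (r j) ^ 2 * x₁ j * x₂ j = (r 0) ^ 2 * x₁ 0 * x₂ 0 :=
  a11_exchange_invariants_general x₁ x₂ hx₁' hmut₁ hmut₂ r hrec
end

section
/- Linearization of the A₁⁽¹⁾ mutation recurrence: let x₁, x₂ be an A₁⁽¹⁾ X-variable sequence, let t be a sequence of nonzero elements of F, and let a be a sequence of nonzero elements of F satisfying a(j+2)·a(j)·t(j) = a(j+1)²·(1 + x₁(j)) for all j ∈ ℕ. Let γ be the sequence with γ(0) = 1 and γ(j+1)·t(j) = γ(j), and set β₀ = a(1)/a(0), K₁ = 1 + x₁(0) + x₁(0)·x₂(0), K₂ = x₁(0)·x₂(0). Then for all j ∈ ℕ: γ(j)⁻¹·γ(j+1)⁻¹·a(j+2) − β₀·K₁·γ(j)⁻¹·a(j+1) + β₀²·K₂·a(j) = 0. -/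
/-!
Put `u j = ∏_{i<j} (1 + x₁ i)`. The exchange relations make `u j * (1 + x₁ j + x₁ j * x₂ j)` and
`u j ^ 2 * (x₁ j * x₂ j)` independent of `j`, so they equal `K₁` and `K₂`. The recurrence for `a`
integrates to the first-order relation `a (j + 1) = β₀ * u j * γ j * a j`; substituting it, the
left-hand side becomes `β₀ ^ 2 * a j * u j ^ 2` times
`(1 + x₁ j) - (1 + x₁ j + x₁ j * x₂ j) + x₁ j * x₂ j = 0`.
-/

open Finset

theorem prod_range_mul_eq_of_forall_mul_succ {M : Type*} [CommMonoid M] {f c : ℕ → M}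
    (h : ∀ k, f (k + 1) * c k = f k) (j : ℕ) : f j * ∏ i ∈ range j, c i = f 0 := by
  induction j with
  | zero => simp
  | succ k ih => rw [prod_range_succ, mul_comm _ (c k), ← mul_assoc, h, ih]

section ExchangeRelations

variable {F : Type*} [Field F] {x₁ x₂ : ℕ → F}

theorem exchange_K₁_step (hmut₁ : ∀ j, x₁ (j + 1) * (1 + x₁ j) ^ 2 = x₂ j * (x₁ j) ^ 2)
    (hmut₂ : ∀ j, x₂ (j + 1) * x₁ j = 1) (k : ℕ) :
    (1 + x₁ (k + 1) + x₁ (k + 1) * x₂ (k + 1)) * (1 + x₁ k) = 1 + x₁ k + x₁ k * x₂ k := by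
  linear_combination x₂ (k + 1) * hmut₁ k
    + (x₂ (k + 1) * x₁ (k + 1) * (1 + x₁ k) - x₁ (k + 1) * (1 + x₂ (k + 1)) * (1 + x₁ k)
      + x₁ k * x₂ k) * hmut₂ k

theorem exchange_K₂_step (hmut₁ : ∀ j, x₁ (j + 1) * (1 + x₁ j) ^ 2 = x₂ j * (x₁ j) ^ 2)
    (hmut₂ : ∀ j, x₂ (j + 1) * x₁ j = 1) (k : ℕ) :
    x₁ (k + 1) * x₂ (k + 1) * (1 + x₁ k) ^ 2 = x₁ k * x₂ k := by
  linear_combination x₂ (k + 1) * hmut₁ k + x₁ k * x₂ k * hmut₂ k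

theorem exchange_K₁_conserved (hmut₁ : ∀ j, x₁ (j + 1) * (1 + x₁ j) ^ 2 = x₂ j * (x₁ j) ^ 2)
    (hmut₂ : ∀ j, x₂ (j + 1) * x₁ j = 1) (j : ℕ) :
    (1 + x₁ j + x₁ j * x₂ j) * ∏ i ∈ range j, (1 + x₁ i) = 1 + x₁ 0 + x₁ 0 * x₂ 0 :=
  prod_range_mul_eq_of_forall_mul_succ (f := fun j ↦ 1 + x₁ j + x₁ j * x₂ j)
    (exchange_K₁_step hmut₁ hmut₂) j

theorem exchange_K₂_conserved (hmut₁ : ∀ j, x₁ (j + 1) * (1 + x₁ j) ^ 2 = x₂ j * (x₁ j) ^ 2)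
    (hmut₂ : ∀ j, x₂ (j + 1) * x₁ j = 1) (j : ℕ) :
    x₁ j * x₂ j * (∏ i ∈ range j, (1 + x₁ i)) ^ 2 = x₁ 0 * x₂ 0 := by
  rw [← prod_pow]
  exact prod_range_mul_eq_of_forall_mul_succ (f := fun j ↦ x₁ j * x₂ j)
    (exchange_K₂_step hmut₁ hmut₂) j

end ExchangeRelations

section FirstOrder

variable {F : Type*} [Field F] {x t a γ : ℕ → F}

theorem ne_zero_of_mul_succ_eq (hγ0 : γ 0 = 1) (hγ : ∀ j, γ (j + 1) * t j = γ j)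
    (j : ℕ) : γ j ≠ 0 :=
  left_ne_zero_of_mul_eq_one ((prod_range_mul_eq_of_forall_mul_succ hγ j).trans hγ0)

theorem succ_eq_of_second_order_recurrence (ht : ∀ j, t j ≠ 0) (ha : ∀ j, a j ≠ 0)
    (harec : ∀ j, a (j + 2) * a j * t j = (a (j + 1)) ^ 2 * (1 + x j))
    (hγ0 : γ 0 = 1) (hγ : ∀ j, γ (j + 1) * t j = γ j) (j : ℕ) :
    a (j + 1) = a 1 / a 0 * (∏ i ∈ range j, (1 + x i)) * γ j * a j := by
  induction j with
  | zero => simp [hγ0, ha 0]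
  | succ k ih =>
    apply mul_right_cancel₀ (mul_ne_zero (ha k) (ht k))
    rw [prod_range_succ]
    linear_combination harec k + (1 + x k) * a (k + 1) * ih
      - (1 + x k) * a (k + 1) * (a 1 / a 0) * (∏ i ∈ range k, (1 + x i)) * a k * hγ k

end FirstOrder

theorem a11_linearization_general {F : Type*} [Field F] (x₁ x₂ : ℕ → F)
    (hmut₁ : ∀ j, x₁ (j + 1) * (1 + x₁ j) ^ 2 = x₂ j * (x₁ j) ^ 2)
    (hmut₂ : ∀ j, x₂ (j + 1) * x₁ j = 1)
    (t : ℕ → F) (ht : ∀ j, t j ≠ 0)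
    (a : ℕ → F) (ha : ∀ j, a j ≠ 0)
    (harec : ∀ j, a (j + 2) * a j * t j = (a (j + 1)) ^ 2 * (1 + x₁ j))
    (γ : ℕ → F) (hγ0 : γ 0 = 1) (hγ : ∀ j, γ (j + 1) * t j = γ j)
    (β₀ K₁ K₂ : F) (hβ₀ : β₀ = a 1 / a 0)
    (hK₁ : K₁ = 1 + x₁ 0 + x₁ 0 * x₂ 0) (hK₂ : K₂ = x₁ 0 * x₂ 0) :
    ∀ j, (γ j)⁻¹ * (γ (j + 1))⁻¹ * a (j + 2)
        - β₀ * K₁ * (γ j)⁻¹ * a (j + 1) + β₀ ^ 2 * K₂ * a j = 0 := by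
  intro j
  subst hβ₀ hK₁ hK₂
  have h₁ := succ_eq_of_second_order_recurrence ht ha harec hγ0 hγ j
  have h₂ := succ_eq_of_second_order_recurrence ht ha harec hγ0 hγ (j + 1)
  have hK₁j := exchange_K₁_conserved hmut₁ hmut₂ j
  have hK₂j := exchange_K₂_conserved hmut₁ hmut₂ j
  have hγj := ne_zero_of_mul_succ_eq hγ0 hγ j
  have hγj' := ne_zero_of_mul_succ_eq hγ0 hγ (j + 1)
  rw [h₂, h₁, prod_range_succ, ← hK₁j, ← hK₂j]
  field_simp
  ring

/-- Linearization of the `A₁⁽¹⁾` mutation recurrence. -/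
theorem a11_linearization {F : Type*} [Field F] (x₁ x₂ : ℕ → F)
    (hx₁ : ∀ j, x₁ j ≠ 0) (hx₁' : ∀ j, 1 + x₁ j ≠ 0)
    (hmut₁ : ∀ j, x₁ (j + 1) * (1 + x₁ j) ^ 2 = x₂ j * (x₁ j) ^ 2)
    (hmut₂ : ∀ j, x₂ (j + 1) * x₁ j = 1)
    (t : ℕ → F) (ht : ∀ j, t j ≠ 0)
    (a : ℕ → F) (ha : ∀ j, a j ≠ 0)
    (harec : ∀ j, a (j + 2) * a j * t j = (a (j + 1)) ^ 2 * (1 + x₁ j))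
    (γ : ℕ → F) (hγ0 : γ 0 = 1) (hγ : ∀ j, γ (j + 1) * t j = γ j)
    (β₀ K₁ K₂ : F) (hβ₀ : β₀ = a 1 / a 0)
    (hK₁ : K₁ = 1 + x₁ 0 + x₁ 0 * x₂ 0) (hK₂ : K₂ = x₁ 0 * x₂ 0) :
    ∀ j, (γ j)⁻¹ * (γ (j + 1))⁻¹ * a (j + 2)
        - β₀ * K₁ * (γ j)⁻¹ * a (j + 1) + β₀ ^ 2 * K₂ * a j = 0 :=
  a11_linearization_general x₁ x₂ hmut₁ hmut₂ t ht a ha harec γ hγ0 hγ β₀ K₁ K₂ hβ₀ hK₁ hK₂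
end

section
/- The squares of the tropical square-root letters are monomials in the asymptotic-chamber cone variables of the scattering diagram: define x_{γ₁}⁺ = y₁·C̃₋⁻², x_{γ₂}⁺ = y₂·C₊², the wall-crossing function f = y₂·C₋²·C̃₋/C̃₊, and x_{γ₁}⁻ = x_{γ₁}⁺·f², x_{γ₂}⁻ = x_{γ₂}⁺·f⁻². Then (C₊/C₋)² = (x_{γ₁}⁺·x_{γ₁}⁻)⁻¹ and (C̃₊/C̃₋)² = x_{γ₂}⁺·x_{γ₂}⁻·(x_{γ₁}⁺·x_{γ₁}⁻)². -/
/-!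
Both sides only involve the four coefficients through the single relation
`y₁ y₂ C₊ C₋ = C̃₊ C̃₋`, which follows from the Vieta-type products
`s² C₊ C₋ = a₀² x₁` and `s² C̃₊ C̃₋ = b₀² x₁² x₂`. Under this relation the wall-crossing
function satisfies `x_{γ₁}⁺ f = C₋ / C₊` and `x_{γ₂}⁺ / f = (C₊ / C₋)² C̃₊ / C̃₋`, so that
`x_{γ₁}⁺ x_{γ₁}⁻ = (x_{γ₁}⁺ f)²` and `x_{γ₂}⁺ x_{γ₂}⁻ = (x_{γ₂}⁺ / f)²` are the claimed monomials.
In characteristic 2 all coefficients are `0` (division by `2 s = 0`) and both identities are `0 = 0`.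
-/

theorem mul_sq_eq_of_sq_sub_sq_eq {F : Type*} [Field F] {a c s t p m : F}
    (h2 : (2 : F) ≠ 0) (hs : s ≠ 0) (ht : s ^ 2 - c ^ 2 = 4 * t)
    (hp : p = a * (c + s) / (2 * s)) (hm : m = a * (-c + s) / (2 * s)) :
    p * m * s ^ 2 = a ^ 2 * t := by
  rw [hp, hm]
  field_simp
  linear_combination a ^ 2 * ht

theorem ne_zero_and_ne_zero_of_mul_mul_eq {M₀ : Type*} [MulZeroClass M₀] {a b c d : M₀}
    (h : a * b * c = d) (hd : d ≠ 0) : a ≠ 0 ∧ b ≠ 0 := by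
  subst h
  have hab : a * b ≠ 0 := left_ne_zero_of_mul hd
  exact ⟨left_ne_zero_of_mul hab, right_ne_zero_of_mul hab⟩

/-- The squares of the tropical square-root letters are monomials in the asymptotic-chamber
cone variables of the scattering diagram. -/
theorem a11_letters_from_cone_variables {F : Type*} [Field F] (x₁ x₂ a₀ b₀ : F)
    (hx₁ : x₁ ≠ 0) (hx₂ : x₂ ≠ 0) (ha₀ : a₀ ≠ 0) (hb₀ : b₀ ≠ 0)
    (K₁ K₂ : F) (hK₁ : K₁ = 1 + x₁ + x₁ * x₂) (hK₂ : K₂ = x₁ * x₂)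
    (s : F) (hs : s ≠ 0) (hs2 : s ^ 2 = K₁ ^ 2 - 4 * K₂)
    (Cp Cm Ctp Ctm y₁ y₂ : F)
    (hCp : Cp = a₀ * (2 - K₁ + s) / (2 * s))
    (hCm : Cm = a₀ * (-2 + K₁ + s) / (2 * s))
    (hCtp : Ctp = b₀ * (2 * K₂ - K₁ + s) / (2 * s))
    (hCtm : Ctm = b₀ * (-(2 * K₂) + K₁ + s) / (2 * s))
    (hy₁ : y₁ = b₀ ^ 2 * x₁) (hy₂ : y₂ = x₂ / a₀ ^ 2)
    (xg1p xg2p f xg1m xg2m : F)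
    (hxg1p : xg1p = y₁ * Ctm⁻¹ ^ 2) (hxg2p : xg2p = y₂ * Cp ^ 2)
    (hf : f = y₂ * Cm ^ 2 * Ctm / Ctp)
    (hxg1m : xg1m = xg1p * f ^ 2) (hxg2m : xg2m = xg2p * f⁻¹ ^ 2) :
    (Cp / Cm) ^ 2 = (xg1p * xg1m)⁻¹ ∧
    (Ctp / Ctm) ^ 2 = xg2p * xg2m * (xg1p * xg1m) ^ 2 := by
  by_cases h2 : (2 : F) = 0
  · have h2s : (2 : F) * s = 0 := by rw [h2, zero_mul]
    simp [hxg1m, hxg2m, hxg1p, hxg2p, hf, hCp, hCm, hCtp, hCtm, h2s]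
  have hCpCm : Cp * Cm * s ^ 2 = a₀ ^ 2 * x₁ :=
    mul_sq_eq_of_sq_sub_sq_eq h2 hs (by rw [hs2, hK₁, hK₂]; ring) hCp (by rw [hCm]; ring)
  have hCtpCtm : Ctp * Ctm * s ^ 2 = b₀ ^ 2 * (x₁ ^ 2 * x₂) :=
    mul_sq_eq_of_sq_sub_sq_eq h2 hs (by rw [hs2, hK₁, hK₂]; ring) hCtp (by rw [hCtm]; ring)
  obtain ⟨hCp0, hCm0⟩ := ne_zero_and_ne_zero_of_mul_mul_eq hCpCm (by simp [ha₀, hx₁])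
  obtain ⟨hCtp0, hCtm0⟩ :=
    ne_zero_and_ne_zero_of_mul_mul_eq hCtpCtm (by simp [hb₀, hx₁, hx₂])
  have hrel : y₁ * y₂ * (Cp * Cm) = Ctp * Ctm := by
    refine mul_right_cancel₀ (pow_ne_zero 2 hs) ?_
    rw [hCtpCtm, mul_assoc, hCpCm, hy₁, hy₂]
    field_simp
  have hxf : xg1p * f = Cm / Cp := by
    rw [hxg1p, hf]
    field_simp
    linear_combination hrel
  have hxf' : xg2p * f⁻¹ = (Cp / Cm) ^ 2 * (Ctp / Ctm) := by
    rw [hxg2p, hf, hy₂]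
    field_simp
  have hprod₁ : xg1p * xg1m = (Cm / Cp) ^ 2 := by rw [hxg1m, ← hxf]; ring
  have hprod₂ : xg2p * xg2m = ((Cp / Cm) ^ 2 * (Ctp / Ctm)) ^ 2 := by rw [hxg2m, ← hxf']; ring
  refine ⟨by rw [hprod₁, ← inv_pow, inv_div], ?_⟩
  rw [hprod₁, hprod₂]
  field_simp
end

section
/- For any integer m ≥ 1 and any sequence c : ℕ → ℤ satisfying c(n+m+1) + c(n) = [c(n+m)]₊ + [c(n+1)]₊ for all n ≥ 0, there exists N ∈ ℕ such that for all n ≥ N: c(n+m) ≥ c(n) ≥ 0. -/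
/-!
Write `d n = c (n + m) - c n`. The recurrence gives `d (n + 1) - d n = [c (n + m)]₋ + [c (n + 1)]₋`,
so `d` is nondecreasing. If `d` stayed negative it would be `≤ -1`, so `c` would drop by at least one
per period, and `c n`, `c (n + 1)`, `c (n + m)`, `c (n + m + 1)` would all be
negative for a suitable `n`; the recurrence then reads `c (n + m + 1) + c n = 0`, which is absurd.
Hence eventually `c n ≤ c (n + m)`, and from then on `c (n + m + 1)` dominates `c (n + 1)` if
`c (n + 1) ≥ 0`, and equals `[c (n + m)]₊ - c n ≥ 0` otherwise.
-/

namespace TropicalCoeff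

variable {m : ℕ} {c : ℕ → ℤ}

theorem apply_mul_add_le_of_shift_lt (h : ∀ n, c (n + m) < c n) (k r : ℕ) :
    c (k * m + r) ≤ c r - k := by
  induction k with
  | zero => simp
  | succ k ih =>
    have hstep := h (k * m + r)
    rw [show (k + 1) * m + r = k * m + r + m by ring]
    push_cast
    omega

variable (hrec : ∀ n : ℕ, c (n + m + 1) + c n = max 0 (c (n + m)) + max 0 (c (n + 1)))
include hrec

theorem monotone_shift_sub : Monotone fun n => c (n + m) - c n := by
  refine monotone_nat_of_le_succ fun n => ?_
  have hr := hrec n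
  rw [show n + 1 + m = n + m + 1 by omega]
  omega

theorem exists_le_shift : ∃ N, c N ≤ c (N + m) := by
  by_contra! hlt
  obtain ⟨k, hk0, hk1⟩ : ∃ k : ℕ, c 0 < k ∧ c 1 < k :=
    ⟨(max (c 0) (c 1)).toNat + 1, by omega, by omega⟩
  have hdrop := apply_mul_add_le_of_shift_lt hlt
  have h0 := hdrop k 0
  have h1 := hdrop k 1
  have hm0 := hdrop (k + 1) 0
  have hm1 := hdrop (k + 1) 1
  have hr := hrec (k * m)
  simp only [add_zero, add_mul, one_mul, Nat.cast_add, Nat.cast_one] at h0 hm0 hm1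
  omega

theorem nonneg_of_le_shift {N : ℕ} (hN : ∀ n ≥ N, c n ≤ c (n + m)) {n : ℕ} (hn : N ≤ n) :
    0 ≤ c (n + m + 1) := by
  have hr := hrec n
  have h0 := hN n hn
  have h1 := hN (n + 1) (by omega)
  rw [show n + 1 + m = n + m + 1 by omega] at h1
  omega

end TropicalCoeff

open TropicalCoeff in
theorem tropical_coeff_eventually_nonneg_general (m : ℕ) (c : ℕ → ℤ)
    (hrec : ∀ n : ℕ, c (n + m + 1) + c n = max 0 (c (n + m)) + max 0 (c (n + 1))) :
    ∃ N : ℕ, ∀ n ≥ N, c n ≤ c (n + m) ∧ 0 ≤ c n := by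
  obtain ⟨N₀, hN₀⟩ := exists_le_shift hrec
  have hle : ∀ n ≥ N₀, c n ≤ c (n + m) := fun n hn => by
    have := monotone_shift_sub hrec hn
    simp only at this
    omega
  refine ⟨N₀ + m + 1, fun n hn => ⟨hle n (by omega), ?_⟩⟩
  obtain ⟨k, rfl⟩ : ∃ k, n = k + m + 1 := ⟨n - m - 1, by omega⟩
  exact nonneg_of_le_shift hrec hle (by omega)

/-- Eventual monotone positivity for the tropical coefficient recurrence of type `A_m⁽¹⁾`. -/
theorem tropical_coeff_eventually_nonneg (m : ℕ) (hm : 1 ≤ m) (c : ℕ → ℤ)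
    (hrec : ∀ n : ℕ, c (n + m + 1) + c n = max 0 (c (n + m)) + max 0 (c (n + 1))) :
    ∃ N : ℕ, ∀ n ≥ N, c n ≤ c (n + m) ∧ 0 ≤ c n :=
  tropical_coeff_eventually_nonneg_general m c hrec
end

section
/- For any integer m ≥ 1 and any sequence c : ℕ → ℤ satisfying c(n+m+1) + c(n) = [c(n+m)]₊ + [c(n+1)]₊ for all n ≥ 0, let Δ(n) := c(n+m) − c(n). If there exists N such that Δ(n) ≥ 1 for all n ≥ N, then there exists N′ such that c(n) ≥ 0 for all n ≥ N′. If instead there exists N such that Δ(n) ≤ −1 for all n ≥ N, then there exists N′ such that c(n) < 0 for all n ≥ N′. -/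
/-!
Along each residue class modulo `m` the sequence gains at least `1` every `m` steps from `N` on,
so `c n ≥ B + (n - N) / m` with `B` a lower bound of `c` on `[N, N + m)`; hence `c → ∞`.
The second claim is the first one applied to `-c`.
-/

open Filter

theorem add_le_of_lt_add_period {m N : ℕ} {c : ℕ → ℤ} (h : ∀ n ≥ N, c n < c (n + m)) (k : ℕ) :
    ∀ n ≥ N, c n + k ≤ c (n + k * m) := by
  induction k with
  | zero => simp
  | succ k ih =>
    intro n hn
    have hstep := h (n + k * m) (by omega)
    rw [Nat.succ_mul, ← add_assoc]
    push_cast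
    linarith [ih n hn]

theorem exists_add_div_le_of_lt_add_period {m N : ℕ} {c : ℕ → ℤ} (hm : 0 < m)
    (h : ∀ n ≥ N, c n < c (n + m)) : ∃ B : ℤ, ∀ n ≥ N, B + ((n - N) / m : ℕ) ≤ c n := by
  obtain ⟨B, hB⟩ := Finite.bddBelow_range fun r : Fin m ↦ c (N + r)
  refine ⟨B, fun n hn ↦ ?_⟩
  have hdecomp : n = N + (n - N) % m + (n - N) / m * m := by
    have := Nat.mod_add_div (n - N) m
    rw [mul_comm] at this; omega
  have hB' : B ≤ c (N + (n - N) % m) := hB ⟨⟨(n - N) % m, Nat.mod_lt _ hm⟩, rfl⟩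
  calc B + ((n - N) / m : ℕ) ≤ c (N + (n - N) % m) + ((n - N) / m : ℕ) := by gcongr
    _ ≤ c n := by
      conv_rhs => rw [hdecomp]
      exact add_le_of_lt_add_period h _ _ (Nat.le_add_right _ _)

theorem tendsto_atTop_of_lt_add_period {m N : ℕ} {c : ℕ → ℤ} (h : ∀ n ≥ N, c n < c (n + m)) :
    Tendsto c atTop atTop := by
  obtain rfl | hm := m.eq_zero_or_pos
  · exact (lt_irrefl _ (h N le_rfl)).elim
  obtain ⟨B, hB⟩ := exists_add_div_le_of_lt_add_period hm h
  have hlin : Tendsto (fun n ↦ B + ((n - N) / m : ℕ)) atTop atTop :=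
    tendsto_atTop_add_const_left _ _ <| tendsto_natCast_atTop_atTop.comp <|
      (Nat.tendsto_div_const_atTop hm.ne').comp (tendsto_sub_atTop_nat N)
  exact tendsto_atTop_mono' _ (eventually_atTop.2 ⟨N, hB⟩) hlin

theorem tropical_coeff_positivity_negativity_general (m : ℕ) (c : ℕ → ℤ) :
    ((∃ N : ℕ, ∀ n ≥ N, 1 ≤ c (n + m) - c n) → ∃ N' : ℕ, ∀ n ≥ N', 0 ≤ c n) ∧
    ((∃ N : ℕ, ∀ n ≥ N, c (n + m) - c n ≤ -1) → ∃ N' : ℕ, ∀ n ≥ N', c n < 0) := by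
  constructor
  · rintro ⟨N, hN⟩
    have hc : Tendsto c atTop atTop :=
      tendsto_atTop_of_lt_add_period fun n hn ↦ by linarith [hN n hn]
    exact eventually_atTop.1 (hc.eventually_ge_atTop 0)
  · rintro ⟨N, hN⟩
    have hc : Tendsto (-c) atTop atTop :=
      tendsto_atTop_of_lt_add_period fun n hn ↦ by simp only [Pi.neg_apply]; linarith [hN n hn]
    exact eventually_atTop.1 ((tendsto_neg_atTop_iff.1 hc).eventually_lt_atBot 0)

/-- Positivity/negativity properties of the tropical coefficient recurrence: an eventually
positive (resp. negative) difference sequence forces eventual nonnegativity (resp. negativity)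
of `c`. -/
theorem tropical_coeff_positivity_negativity (m : ℕ) (hm : 1 ≤ m) (c : ℕ → ℤ)
    (hrec : ∀ n : ℕ, c (n + m + 1) + c n = max 0 (c (n + m)) + max 0 (c (n + 1))) :
    ((∃ N : ℕ, ∀ n ≥ N, 1 ≤ c (n + m) - c n) → ∃ N' : ℕ, ∀ n ≥ N', 0 ≤ c n) ∧
    ((∃ N : ℕ, ∀ n ≥ N, c (n + m) - c n ≤ -1) → ∃ N' : ℕ, ∀ n ≥ N', c n < 0) :=
  tropical_coeff_positivity_negativity_general m c
end

section
/- For any integer m ≥ 1 and any sequence c : ℕ → ℤ satisfying c(n+m+1) + c(n) = [c(n+m)]₊ + [c(n+1)]₊ for all n ≥ 0, there exists N ∈ ℕ such that for all n ≥ N: min(0, c(n+m) + min(0, −c(n))) = 0. (This says that the exponent of each frozen variable in the tropical prefactor γⱼ = 1 ⊕̂ y₁;ⱼ ⊕̂ y₁;ⱼ·(y₁;ⱼ₋ₘ)⁻¹ vanishes for all sufficiently large j, i.e. γⱼ = 1 eventually.) -/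
/-!
With `g n := c (n + m) + min 0 (-c n)`, the claim is that `g n ≥ 0` eventually. The recurrence
gives `g (n + 1) - g n = [-c (n + m)]₊ + [-c n]₊ ≥ 0`, so `g` is monotone. If `g` stayed negative
it would be bounded, hence eventually constant, equal to some `M < 0`. From then on both
increments vanish, so `c ≥ 0` and `c (n + m) = c n + M`; along an arithmetic progression of
step `m` the sequence `c` would then drop below zero.
-/

theorem Int.exists_forall_ge_eq_of_monotone {a : ℕ → ℤ} (ha : Monotone a)
    (hb : BddAbove (Set.range a)) : ∃ n₀, ∀ n ≥ n₀, a n = a n₀ := by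
  obtain ⟨n₀, hn₀⟩ := Int.csSup_mem (Set.range_nonempty a) hb
  exact ⟨n₀, fun n hn => le_antisymm (hn₀ ▸ le_csSup hb ⟨n, rfl⟩) (ha hn)⟩

theorem Int.exists_neg_of_forall_ge_add_eq {c : ℕ → ℤ} {m n₀ : ℕ} {M : ℤ} (hM : M < 0)
    (hc : ∀ n ≥ n₀, c (n + m) = c n + M) : ∃ n ≥ n₀, c n < 0 := by
  have progression : ∀ k : ℕ, c (n₀ + k * m) = c n₀ + k * M := by
    intro k
    induction k with
    | zero => simp
    | succ k ih =>
      rw [Nat.succ_mul, ← add_assoc, hc _ (Nat.le_add_right _ _), ih]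
      push_cast
      ring
  refine ⟨n₀ + ((c n₀).toNat + 1) * m, Nat.le_add_right _ _, ?_⟩
  rw [progression]
  push_cast
  nlinarith [Int.self_le_toNat (c n₀)]

namespace TropicalPrefactor

variable {m : ℕ} {c : ℕ → ℤ}

def gap (m : ℕ) (c : ℕ → ℤ) (n : ℕ) : ℤ := c (n + m) + min 0 (-c n)

theorem gap_succ_sub
    (hrec : ∀ n : ℕ, c (n + m + 1) + c n = max 0 (c (n + m)) + max 0 (c (n + 1))) (n : ℕ) :
    gap m c (n + 1) - gap m c n = max 0 (-c (n + m)) + max 0 (-c n) := by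
  have h := hrec n
  rw [show n + m + 1 = n + 1 + m by omega] at h
  simp only [gap]
  omega

theorem gap_monotone
    (hrec : ∀ n : ℕ, c (n + m + 1) + c n = max 0 (c (n + m)) + max 0 (c (n + 1))) :
    Monotone (gap m c) :=
  monotone_nat_of_le_succ fun n => by
    linarith [gap_succ_sub hrec n, le_max_left 0 (-c (n + m)), le_max_left 0 (-c n)]

theorem add_eq_of_gap_succ_eq
    (hrec : ∀ n : ℕ, c (n + m + 1) + c n = max 0 (c (n + m)) + max 0 (c (n + 1))) {n : ℕ}
    (h : gap m c (n + 1) = gap m c n) : 0 ≤ c n ∧ c (n + m) = c n + gap m c n := by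
  have h' := gap_succ_sub hrec n
  simp only [gap] at h h' ⊢
  omega

end TropicalPrefactor

open TropicalPrefactor in
theorem tropical_prefactor_eventually_one_general (m : ℕ) (c : ℕ → ℤ)
    (hrec : ∀ n : ℕ, c (n + m + 1) + c n = max 0 (c (n + m)) + max 0 (c (n + 1))) :
    ∃ N : ℕ, ∀ n ≥ N, min 0 (c (n + m) + min 0 (-(c n))) = 0 := by
  suffices ∃ N, 0 ≤ gap m c N by
    obtain ⟨N, hN⟩ := this
    exact ⟨N, fun n hn => min_eq_left (hN.trans (gap_monotone hrec hn))⟩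
  by_contra! hneg
  obtain ⟨n₀, hconst⟩ := Int.exists_forall_ge_eq_of_monotone (gap_monotone hrec)
    ⟨0, by rintro _ ⟨n, rfl⟩; exact (hneg n).le⟩
  have hstep : ∀ n ≥ n₀, 0 ≤ c n ∧ c (n + m) = c n + gap m c n₀ := fun n hn => by
    rw [← hconst n hn]
    exact add_eq_of_gap_succ_eq hrec (by rw [hconst n hn, hconst (n + 1) (by omega)])
  obtain ⟨n, hn, hcn⟩ := Int.exists_neg_of_forall_ge_add_eq (hneg n₀) fun n hn => (hstep n hn).2
  exact (hstep n hn).1.not_gt hcn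

/-- The exponent of each frozen variable in the tropical prefactor
`γⱼ = 1 ⊕̂ y₁;ⱼ ⊕̂ y₁;ⱼ·(y₁;ⱼ₋ₘ)⁻¹` vanishes for all sufficiently large `j`. -/
theorem tropical_prefactor_eventually_one (m : ℕ) (hm : 1 ≤ m) (c : ℕ → ℤ)
    (hrec : ∀ n : ℕ, c (n + m + 1) + c n = max 0 (c (n + m)) + max 0 (c (n + 1))) :
    ∃ N : ℕ, ∀ n ≥ N, min 0 (c (n + m) + min 0 (-(c n))) = 0 :=
  tropical_prefactor_eventually_one_general m c hrec
end

section
/- Sink-direction version: for any integer m ≥ 1 and any two-sided sequence c : ℤ → ℤ satisfying c(n+1) + c(n−m) = [c(n)]₊ + [c(n−m+1)]₊ for all n ∈ ℤ, there exists N ∈ ℕ such that for all n ≥ N: c(−n) ≥ c(−n+m) ≥ 0. (The reversed sequence d(n) = c(−n) satisfies a recurrence of the same form, so the eventual positivity and monotonicity hold also in the backward direction of the mutation sequence.) -/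
/-!
Put `g x = [d (x + 1)]₊ - d x`. The recurrence says
`g (x + m) - g x = (d (x + m + 1))⁻ + (d (x + m))⁻` and `g x ≤ d (x + m + 1)`, so `g` is
nondecreasing along every progression `r + mℤ`.
If `g` were unbounded on `r + mℤ`, then `d → ∞` on `r + 1 + mℤ`; the increments of `g` on
`r - 1 + mℤ` would eventually dominate those on `r + mℤ`, so `d → ∞` on `r + mℤ` too, and then
`g` would be eventually constant on `r + mℤ`, a contradiction. So `g` is eventually constant on
every progression, which forces `d ≥ 0` eventually. From then on the recurrence is linear, making
`d (n + m) - d n` eventually constant, and a negative constant would drive `d` to `-∞`.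
The sequence `n ↦ c (-n)` satisfies the same recurrence, which gives the backward statement.
-/

open Filter

theorem eventually_atTop_add_const_iff {P : ℤ → Prop} (c : ℤ) :
    (∀ᶠ k in atTop, P (k + c)) ↔ ∀ᶠ k in atTop, P k := by
  simp only [eventually_atTop]
  constructor
  · rintro ⟨K, hK⟩
    exact ⟨K + c, fun k hk => by simpa using hK (k - c) (by omega)⟩
  · rintro ⟨K, hK⟩
    exact ⟨K - c, fun k hk => hK (k + c) (by omega)⟩

theorem tendsto_atTop_of_eventually_sub_le_sub {f g : ℤ → ℤ} (hg : Tendsto g atTop atTop)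
    (h : ∀ᶠ k in atTop, g (k + 1) - g k ≤ f (k + 1) - f k) : Tendsto f atTop atTop := by
  obtain ⟨K, hK⟩ := eventually_atTop.1 h
  have hbound : ∀ k ≥ K, g k + (f K - g K) ≤ f k := by
    intro k hk
    induction k, hk using Int.leInduction with
    | base => simp
    | succ k hk ih => linarith [hK k hk]
  exact tendsto_atTop_mono' _ (eventually_atTop.2 ⟨K, hbound⟩)
    (tendsto_atTop_add_const_right _ _ hg)

theorem Monotone.eventually_succ_eq_of_not_tendsto {f : ℤ → ℤ} (hf : Monotone f)
    (h : ¬Tendsto f atTop atTop) : ∀ᶠ k in atTop, f (k + 1) = f k := by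
  have hbdd : BddAbove (Set.range f) := by
    by_contra hbdd
    exact h (tendsto_atTop_atTop_of_monotone' hf hbdd)
  have hconst : ∀ᶠ k in atTop, f k = ⨆ i, f i := by
    simpa [nhds_discrete] using tendsto_atTop_ciSup hf hbdd
  filter_upwards [hconst, (eventually_atTop_add_const_iff 1).2 hconst] with k hk hk1
  rw [hk, hk1]

theorem eventually_of_forall_eventually_progression {m : ℤ} (hm : 0 < m) {P : ℤ → Prop}
    (h : ∀ r, ∀ᶠ k in atTop, P (r + k * m)) : ∀ᶠ n in atTop, P n := by
  obtain ⟨K, hK⟩ := eventually_atTop.1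
    ((eventually_all_finset (Finset.Ico 0 m)).2 fun r _ => h r)
  refine eventually_atTop.2 ⟨K * m, fun n hn => ?_⟩
  have hdecomp : n % m + n / m * m = n := by rw [mul_comm]; exact Int.emod_add_mul_ediv n m
  rw [← hdecomp]
  refine hK _ (Int.le_ediv_of_mul_le hm hn) _ ?_
  exact Finset.mem_Ico.2 ⟨Int.emod_nonneg n hm.ne', Int.emod_lt_of_pos n hm⟩

theorem max_zero_sub_self {α : Type*} [AddCommGroup α] [LinearOrder α] [IsOrderedAddMonoid α]
    (x : α) : max 0 x - x = x⁻ := by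
  rw [negPart_def, ← max_sub_sub_right, zero_sub, sub_self, max_comm]

theorem Filter.Tendsto.eventually_negPart_eq_zero {ι α : Type*} {l : Filter ι} [Lattice α]
    [AddGroup α] [AddLeftMono α] {f : ι → α} (h : Tendsto f l atTop) :
    ∀ᶠ k in l, (f k)⁻ = 0 :=
  (h.eventually_ge_atTop 0).mono fun _ hk => negPart_eq_zero.2 hk

def IsTropicalRecurrence (m : ℕ) (d : ℤ → ℤ) : Prop :=
  ∀ n : ℤ, d (n + 1) + d (n - m) = max 0 (d n) + max 0 (d (n - m + 1))

namespace IsTropicalRecurrence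

variable {m : ℕ} {d : ℤ → ℤ}

theorem comp_neg (hd : IsTropicalRecurrence m d) : IsTropicalRecurrence m (fun n => d (-n)) := by
  intro n
  have h := hd (m - n - 1)
  rw [show (m : ℤ) - n - 1 + 1 = -(n - m) by ring, show (m : ℤ) - n - 1 - m = -(n + 1) by ring,
    show (m : ℤ) - n - 1 = -(n - m + 1) by ring, show -(n + 1) + 1 = -n by ring] at h
  dsimp only
  linarith

theorem add_eq (hd : IsTropicalRecurrence m d) (x : ℤ) :
    d (x + m + 1) + d x = max 0 (d (x + m)) + max 0 (d (x + 1)) := by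
  simpa using hd (x + m)

def gap (d : ℤ → ℤ) (x : ℤ) : ℤ := max 0 (d (x + 1)) - d x

theorem gap_succ_sub (hd : IsTropicalRecurrence m d) (r k : ℤ) :
    gap d (r + (k + 1) * m) - gap d (r + k * m) =
      (d (r + 1 + (k + 1) * m))⁻ + (d (r + (k + 1) * m))⁻ := by
  have h := hd.add_eq (r + k * m)
  simp only [gap, ← max_zero_sub_self]
  rw [show r + k * m + m = r + (k + 1) * m by ring] at h
  rw [show r + (k + 1) * m + 1 = r + 1 + (k + 1) * m by ring] at h ⊢
  linarith

theorem gap_le (hd : IsTropicalRecurrence m d) (r k : ℤ) :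
    gap d (r + k * m) ≤ d (r + 1 + (k + 1) * m) := by
  have h := hd.add_eq (r + k * m)
  rw [show r + k * m + m = r + (k + 1) * m by ring,
    show r + (k + 1) * m + 1 = r + 1 + (k + 1) * m by ring] at h
  simp only [gap]
  linarith [le_max_left 0 (d (r + (k + 1) * m))]

theorem monotone_gap (hd : IsTropicalRecurrence m d) (r : ℤ) :
    Monotone fun k : ℤ => gap d (r + k * m) :=
  monotone_int_of_le_succ fun k => by
    linarith [hd.gap_succ_sub r k, negPart_nonneg (d (r + 1 + (k + 1) * m)),
      negPart_nonneg (d (r + (k + 1) * m))]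

theorem tendsto_of_tendsto_gap (hd : IsTropicalRecurrence m d) {r : ℤ}
    (h : Tendsto (fun k : ℤ => gap d (r + k * m)) atTop atTop) :
    Tendsto (fun k : ℤ => d (r + 1 + k * m)) atTop atTop := by
  refine tendsto_atTop.2 fun b => (eventually_atTop_add_const_iff 1).1 ?_
  filter_upwards [tendsto_atTop.1 h b] with k hk
  exact hk.trans (hd.gap_le r k)

theorem not_tendsto_gap (hd : IsTropicalRecurrence m d) (r : ℤ) :
    ¬Tendsto (fun k : ℤ => gap d (r + k * m)) atTop atTop := by
  intro h
  have hnext := (eventually_atTop_add_const_iff 1).2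
    (hd.tendsto_of_tendsto_gap h).eventually_negPart_eq_zero
  have hprev : Tendsto (fun k : ℤ => gap d (r - 1 + k * m)) atTop atTop := by
    refine tendsto_atTop_of_eventually_sub_le_sub h ?_
    filter_upwards [hnext] with k hk
    have := hd.gap_succ_sub (r - 1) k
    rw [sub_add_cancel] at this
    linarith [hd.gap_succ_sub r k, negPart_nonneg (d (r - 1 + (k + 1) * m))]
  have hcur := (eventually_atTop_add_const_iff 1).2
    (hd.tendsto_of_tendsto_gap hprev).eventually_negPart_eq_zero
  refine not_tendsto_const_atTop (0 : ℤ) atTop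
    (tendsto_atTop_of_eventually_sub_le_sub h ?_)
  filter_upwards [hnext, hcur] with k hk hk'
  rw [sub_add_cancel] at hk'
  linarith [hd.gap_succ_sub r k]

theorem eventually_nonneg_progression (hd : IsTropicalRecurrence m d) (r : ℤ) :
    ∀ᶠ k in atTop, 0 ≤ d (r + k * m) := by
  refine (eventually_atTop_add_const_iff 1).1 ?_
  filter_upwards [(hd.monotone_gap r).eventually_succ_eq_of_not_tendsto (hd.not_tendsto_gap r)]
    with k hk
  refine negPart_eq_zero.1 (le_antisymm ?_ (negPart_nonneg _))
  linarith [hd.gap_succ_sub r k, negPart_nonneg (d (r + 1 + (k + 1) * m))]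

theorem eventually_nonneg (hd : IsTropicalRecurrence m d) (hm : 0 < m) :
    ∀ᶠ n in atTop, 0 ≤ d n :=
  eventually_of_forall_eventually_progression (by exact_mod_cast hm)
    hd.eventually_nonneg_progression

theorem eventually_le_add (hd : IsTropicalRecurrence m d) (hm : 0 < m) :
    ∀ᶠ n in atTop, d n ≤ d (n + m) := by
  obtain ⟨N, hN⟩ := eventually_atTop.1 (hd.eventually_nonneg hm)
  have hstep : ∀ y ≥ N, d (y + 1 + m) - d (y + 1) = d (y + m) - d y := by
    intro y hy
    have h := hd.add_eq y
    rw [max_eq_right (hN _ (by omega)), max_eq_right (hN _ (by omega)),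
      show y + m + 1 = y + 1 + m by ring] at h
    linarith
  have hconst : ∀ y ≥ N, d (y + m) - d y = d (N + m) - d N := by
    intro y hy
    induction y, hy using Int.leInduction with
    | base => rfl
    | succ y hy ih => rw [hstep y hy, ih]
  have hδ : 0 ≤ d (N + m) - d N := by
    by_contra! hneg
    have hdiv : Tendsto (fun k : ℤ => -d (N + k * m)) atTop atTop := by
      refine tendsto_atTop_of_eventually_sub_le_sub tendsto_id
        (eventually_atTop.2 ⟨0, fun k hk => ?_⟩)
      have := hconst (N + k * m) (by nlinarith)
      rw [show N + k * m + m = N + (k + 1) * m by ring] at this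
      simp only [id]
      linarith
    obtain ⟨k, hk, hk0⟩ := ((hdiv.eventually_gt_atTop 0).and (eventually_ge_atTop 0)).exists
    linarith [hN (N + k * m) (by nlinarith)]
  exact eventually_atTop.2 ⟨N, fun n hn => by linarith [hconst n hn]⟩

end IsTropicalRecurrence

/-- Sink-direction version: eventual monotone positivity of the tropical coefficient
recurrence in the backward direction of the mutation sequence. -/
theorem tropical_coeff_eventually_nonneg_sink (m : ℕ) (hm : 1 ≤ m) (c : ℤ → ℤ)
    (hrec : ∀ n : ℤ, c (n + 1) + c (n - m) = max 0 (c n) + max 0 (c (n - m + 1))) :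
    ∃ N : ℕ, ∀ n : ℕ, N ≤ n → c (-(n : ℤ) + m) ≤ c (-(n : ℤ)) ∧ 0 ≤ c (-(n : ℤ) + m) := by
  have hd : IsTropicalRecurrence m (fun n => c (-n)) := IsTropicalRecurrence.comp_neg hrec
  have hsink : ∀ᶠ n : ℤ in atTop, c (-n + m) ≤ c (-n) ∧ 0 ≤ c (-n + m) := by
    have h := (eventually_atTop_add_const_iff (-m : ℤ)).2
      ((hd.eventually_le_add hm).and (hd.eventually_nonneg hm))
    filter_upwards [h] with n ⟨hle, hnonneg⟩
    rw [neg_add_cancel_right] at hle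
    rw [show -n + m = -(n + -m) by ring]
    exact ⟨hle, hnonneg⟩
  exact eventually_atTop.1 (tendsto_natCast_atTop_atTop.eventually hsink)
end

section
/- Invariance of the first exchange invariant along an A_m⁽¹⁾ X-variable sequence: if r : ℤ → F is a sequence of nonzero elements satisfying r(j+1) = (1 + x₁(j))·r(j) for all j ∈ ℤ, then for every j ∈ ℤ one has r(j)·(1 + x₁(j) + x₁(j)·N(j)) = r(0)·K₁, where K₁ := 1 + x₁(0)·(1 + x₂(0)·(1 + ⋯ x_m(0)·(1 + x_{m+1}(0))⋯)). -/
/-!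
The mutation rules say that, up to the first variable, one step of the sequence shifts the
nested expression by one level: `x_m(j+1)·(1 + x_{m+1}(j+1)) = x_{m+1}(j)` and
`x_i(j+1) = x_{i+1}(j)` for `2 ≤ i ≤ m-1`, so the innermost `m-1` levels of `N(j+1)` form the
innermost `m-2` levels of `N(j)`. Writing `N(j) = x₂(j)·(1 + M)`, the remaining two rules
`x₁(j+1)·(1 + x₁(j)) = x₂(j)·x₁(j)` and `r(j+1) = (1 + x₁(j))·r(j)` then make
`r(j)·(1 + x₁(j) + x₁(j)·N(j))` independent of `j`.
-/

/-- The nested expression `x_{m+1-k}(j)·(1 + x_{m+2-k}(j)·(1 + ⋯ x_m(j)·(1 + x_{m+1}(j))⋯))`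
built from the X-variables `x i j`; `nestAux x m j (m-1)` is the expression
`N(j) = x₂(j)·(1 + x₃(j)·(1 + ⋯ x_m(j)·(1 + x_{m+1}(j))⋯))`. -/
def nestAux {F : Type*} [Field F] (x : ℕ → ℤ → F) (m : ℕ) (j : ℤ) : ℕ → F
  | 0 => x (m + 1) j
  | k + 1 => x (m - k) j * (1 + nestAux x m j k)

section

variable {F : Type*} [Field F] {m : ℕ} {x : ℕ → ℤ → F}

theorem nestAux_succ_shift_zero (j : ℤ)
    (hmutB : x m (j + 1) * (1 + x 1 j) = x (m + 1) j * x 1 j)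
    (hmutC : x (m + 1) (j + 1) * x 1 j = 1) :
    nestAux x m (j + 1) 1 = nestAux x m j 0 := by
  simp only [nestAux, Nat.sub_zero]
  linear_combination x (m + 1) (j + 1) * hmutB + (x (m + 1) j - x m (j + 1)) * hmutC

theorem nestAux_succ_shift (j : ℤ)
    (hmutB : x m (j + 1) * (1 + x 1 j) = x (m + 1) j * x 1 j)
    (hmutC : x (m + 1) (j + 1) * x 1 j = 1)
    (hmutD : ∀ i : ℕ, 2 ≤ i → i ≤ m - 1 → x i (j + 1) = x (i + 1) j) :
    ∀ k ≤ m - 2, nestAux x m (j + 1) (k + 1) = nestAux x m j k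
  | 0, _ => nestAux_succ_shift_zero j hmutB hmutC
  | k + 1, hk => by
    have hshift : x (m - (k + 1)) (j + 1) = x (m - k) j := by
      rw [hmutD (m - (k + 1)) (by omega) (by omega)]
      congr 1
      omega
    show x (m - (k + 1)) (j + 1) * (1 + nestAux x m (j + 1) (k + 1))
      = x (m - k) j * (1 + nestAux x m j k)
    rw [hshift, nestAux_succ_shift j hmutB hmutC hmutD k (by omega)]

theorem nestAux_sub_one (hm : 2 ≤ m) (j : ℤ) :
    nestAux x m j (m - 1) = x 2 j * (1 + nestAux x m j (m - 2)) := by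
  rw [show m - 1 = m - 2 + 1 by omega, nestAux, show m - (m - 2) = 2 by omega]

def firstInvariant (x : ℕ → ℤ → F) (m : ℕ) (r : ℤ → F) (j : ℤ) : F :=
  r j * (1 + x 1 j + x 1 j * nestAux x m j (m - 1))

theorem firstInvariant_periodic (hm : 2 ≤ m)
    (hmutA : ∀ j : ℤ, x 1 (j + 1) * (1 + x 1 j) = x 2 j * x 1 j)
    (hmutB : ∀ j : ℤ, x m (j + 1) * (1 + x 1 j) = x (m + 1) j * x 1 j)
    (hmutC : ∀ j : ℤ, x (m + 1) (j + 1) * x 1 j = 1)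
    (hmutD : ∀ j : ℤ, ∀ i : ℕ, 2 ≤ i → i ≤ m - 1 → x i (j + 1) = x (i + 1) j)
    {r : ℤ → F} (hrec : ∀ j : ℤ, r (j + 1) = (1 + x 1 j) * r j) :
    Function.Periodic (firstInvariant x m r) 1 := by
  intro j
  have hN : nestAux x m (j + 1) (m - 1) = nestAux x m j (m - 2) := by
    rw [show m - 1 = m - 2 + 1 by omega]
    exact nestAux_succ_shift j (hmutB j) (hmutC j) (hmutD j) (m - 2) le_rfl
  simp only [firstInvariant, hN, nestAux_sub_one hm j, hrec j]
  linear_combination (r j * (1 + nestAux x m j (m - 2))) * hmutA j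

end

theorem am1_first_invariant_general {F : Type*} [Field F] (m : ℕ) (hm : 2 ≤ m)
    (x : ℕ → ℤ → F)
    (hmutA : ∀ j : ℤ, x 1 (j + 1) * (1 + x 1 j) = x 2 j * x 1 j)
    (hmutB : ∀ j : ℤ, x m (j + 1) * (1 + x 1 j) = x (m + 1) j * x 1 j)
    (hmutC : ∀ j : ℤ, x (m + 1) (j + 1) * x 1 j = 1)
    (hmutD : ∀ j : ℤ, ∀ i : ℕ, 2 ≤ i → i ≤ m - 1 → x i (j + 1) = x (i + 1) j)
    (r : ℤ → F)
    (hrec : ∀ j : ℤ, r (j + 1) = (1 + x 1 j) * r j) :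
    ∀ j : ℤ, r j * (1 + x 1 j + x 1 j * nestAux x m j (m - 1))
      = r 0 * (1 + x 1 0 * (1 + nestAux x m 0 (m - 1))) := by
  intro j
  have h := (firstInvariant_periodic hm hmutA hmutB hmutC hmutD hrec).int_mul_eq j
  simp only [firstInvariant, mul_one, Int.cast_id] at h
  linear_combination h

/-- Invariance of the first exchange invariant along an `A_m⁽¹⁾` X-variable sequence. -/
theorem am1_first_invariant {F : Type*} [Field F] (m : ℕ) (hm : 2 ≤ m)
    (x : ℕ → ℤ → F)
    (hx₁ : ∀ j : ℤ, x 1 j ≠ 0) (hx₁' : ∀ j : ℤ, 1 + x 1 j ≠ 0)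
    (hmutA : ∀ j : ℤ, x 1 (j + 1) * (1 + x 1 j) = x 2 j * x 1 j)
    (hmutB : ∀ j : ℤ, x m (j + 1) * (1 + x 1 j) = x (m + 1) j * x 1 j)
    (hmutC : ∀ j : ℤ, x (m + 1) (j + 1) * x 1 j = 1)
    (hmutD : ∀ j : ℤ, ∀ i : ℕ, 2 ≤ i → i ≤ m - 1 → x i (j + 1) = x (i + 1) j)
    (r : ℤ → F) (hr : ∀ j : ℤ, r j ≠ 0)
    (hrec : ∀ j : ℤ, r (j + 1) = (1 + x 1 j) * r j) :
    ∀ j : ℤ, r j * (1 + x 1 j + x 1 j * nestAux x m j (m - 1))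
      = r 0 * (1 + x 1 0 * (1 + nestAux x m 0 (m - 1))) :=
  am1_first_invariant_general m hm x hmutA hmutB hmutC hmutD r hrec
end

section
/- Invariance of the second exchange invariant along an A_m⁽¹⁾ X-variable sequence: if r : ℤ → F is a sequence of nonzero elements satisfying r(j+1) = (1 + x₁(j))·r(j) for all j ∈ ℤ, then the quantity r(j)·r(j−m+1)·x₁(j)·N(j) is independent of j, i.e. r(j)·r(j−m+1)·x₁(j)·N(j) = r(k)·r(k−m+1)·x₁(k)·N(k) for all j, k ∈ ℤ. -/
theorem x_sub_eq_x_sub_of_shift {α : Type*} {m : ℕ} {x : ℕ → ℤ → α}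
    (hD : ∀ j : ℤ, ∀ i : ℕ, 2 ≤ i → i ≤ m - 1 → x i (j + 1) = x (i + 1) j) :
    ∀ k : ℕ, k + 2 ≤ m → ∀ j : ℤ, x (m - k) j = x m (j - k) := by
  intro k
  induction k with
  | zero => simp
  | succ k ih =>
    intro hk j
    have hstep := hD (j - 1) (m - (k + 1)) (by omega) (by omega)
    rw [sub_add_cancel, show m - (k + 1) + 1 = m - k by omega] at hstep
    rw [hstep, ih (by omega)]
    congr 1
    push_cast
    ring

section Mutation

variable {F : Type*} [Field F] {m : ℕ} {x : ℕ → ℤ → F}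

theorem x_mul_one_add_x_succ_eq
    (hB : ∀ j : ℤ, x m (j + 1) * (1 + x 1 j) = x (m + 1) j * x 1 j)
    (hC : ∀ j : ℤ, x (m + 1) (j + 1) * x 1 j = 1) (j : ℤ) :
    x m (j + 1) * (1 + x (m + 1) (j + 1)) = x (m + 1) j := by
  apply mul_right_cancel₀ (right_ne_zero_of_mul_eq_one (hC j))
  linear_combination hB j + x m (j + 1) * hC j

variable (hB : ∀ j : ℤ, x m (j + 1) * (1 + x 1 j) = x (m + 1) j * x 1 j)
  (hC : ∀ j : ℤ, x (m + 1) (j + 1) * x 1 j = 1)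
  (hD : ∀ j : ℤ, ∀ i : ℕ, 2 ≤ i → i ≤ m - 1 → x i (j + 1) = x (i + 1) j)
include hB hC hD

theorem nestAux_eq_x_sub : ∀ k : ℕ, k + 1 ≤ m → ∀ j : ℤ, nestAux x m j k = x (m + 1) (j - k) := by
  intro k
  induction k with
  | zero => simp [nestAux]
  | succ k ih =>
    intro hk j
    have hfold := x_mul_one_add_x_succ_eq hB hC (j - ↑(k + 1))
    rw [show j - ↑(k + 1) + 1 = j - k by push_cast; ring] at hfold
    rw [nestAux, ih (by omega), x_sub_eq_x_sub_of_shift hD k (by omega), hfold]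

theorem nestAux_pred_eq (hm : 1 ≤ m) (j : ℤ) :
    nestAux x m j (m - 1) = x (m + 1) (j - m + 1) := by
  rw [nestAux_eq_x_sub hB hC hD (m - 1) (by omega)]
  congr 1
  omega

theorem x_two_mul_one_add_eq (hm : 2 ≤ m) (j : ℤ) :
    x 2 j * (1 + x (m + 1) (j - m + 1 + 1)) = x (m + 1) (j - m + 1) := by
  have hx₂ := x_sub_eq_x_sub_of_shift hD (m - 2) (by omega) j
  rw [show m - (m - 2) = 2 by omega, show j - ↑(m - 2) = j - m + 1 + 1 by omega] at hx₂
  rw [hx₂, x_mul_one_add_x_succ_eq hB hC]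

end Mutation

theorem am1_second_invariant_general {F : Type*} [Field F] (m : ℕ) (hm : 2 ≤ m)
    (x : ℕ → ℤ → F)
    (hmutA : ∀ j : ℤ, x 1 (j + 1) * (1 + x 1 j) = x 2 j * x 1 j)
    (hmutB : ∀ j : ℤ, x m (j + 1) * (1 + x 1 j) = x (m + 1) j * x 1 j)
    (hmutC : ∀ j : ℤ, x (m + 1) (j + 1) * x 1 j = 1)
    (hmutD : ∀ j : ℤ, ∀ i : ℕ, 2 ≤ i → i ≤ m - 1 → x i (j + 1) = x (i + 1) j)
    (r : ℤ → F)
    (hrec : ∀ j : ℤ, r (j + 1) = (1 + x 1 j) * r j) :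
    ∀ j k : ℤ, r j * r (j - m + 1) * x 1 j * nestAux x m j (m - 1)
      = r k * r (k - m + 1) * x 1 k * nestAux x m k (m - 1) := by
  simp only [nestAux_pred_eq hmutB hmutC hmutD (by omega : 1 ≤ m)]
  set I : ℤ → F := fun j ↦ r j * r (j - m + 1) * x 1 j * x (m + 1) (j - m + 1) with hI
  have hperiodic : Function.Periodic I 1 := by
    intro j
    have ha : j + 1 - m + 1 = j - m + 1 + 1 := by ring
    have hx₂ := x_two_mul_one_add_eq hmutB hmutC hmutD hm j
    simp only [hI, ha]
    set a := j - m + 1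
    calc r (j + 1) * r (a + 1) * x 1 (j + 1) * x (m + 1) (a + 1)
        = x 1 (j + 1) * (1 + x 1 j) * r j * ((1 + x 1 a) * r a) * x (m + 1) (a + 1) := by
          rw [hrec, hrec]; ring
      _ = r j * r a * x 1 j * x 2 j * (x (m + 1) (a + 1) + x (m + 1) (a + 1) * x 1 a) := by
          rw [hmutA]; ring
      _ = r j * r a * x 1 j * x (m + 1) a := by rw [hmutC, ← hx₂]; ring
  intro j k
  simpa using (hperiodic.int_mul_eq j).trans (hperiodic.int_mul_eq k).symm

/-- Invariance of the second exchange invariant along an `A_m⁽¹⁾` X-variable sequence. -/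
theorem am1_second_invariant {F : Type*} [Field F] (m : ℕ) (hm : 2 ≤ m)
    (x : ℕ → ℤ → F)
    (hx₁ : ∀ j : ℤ, x 1 j ≠ 0) (hx₁' : ∀ j : ℤ, 1 + x 1 j ≠ 0)
    (hmutA : ∀ j : ℤ, x 1 (j + 1) * (1 + x 1 j) = x 2 j * x 1 j)
    (hmutB : ∀ j : ℤ, x m (j + 1) * (1 + x 1 j) = x (m + 1) j * x 1 j)
    (hmutC : ∀ j : ℤ, x (m + 1) (j + 1) * x 1 j = 1)
    (hmutD : ∀ j : ℤ, ∀ i : ℕ, 2 ≤ i → i ≤ m - 1 → x i (j + 1) = x (i + 1) j)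
    (r : ℤ → F) (hr : ∀ j : ℤ, r j ≠ 0)
    (hrec : ∀ j : ℤ, r (j + 1) = (1 + x 1 j) * r j) :
    ∀ j k : ℤ, r j * r (j - m + 1) * x 1 j * nestAux x m j (m - 1)
      = r k * r (k - m + 1) * x 1 k * nestAux x m k (m - 1) :=
  am1_second_invariant_general m hm x hmutA hmutB hmutC hmutD r hrec
end

section
/- Along an A_m⁽¹⁾ X-variable sequence, the nested expression reproduces the inverse of the first X-variable m steps earlier: for every j ∈ ℤ one has x₁(j)·N(j+m) = 1, i.e. N(j+m) = x₁(j)⁻¹. -/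
lemma mul_one_add_eq_of_mul_eq {F : Type*} [Field F] {u y z w : F} (hu : 1 + u ≠ 0)
    (hy : y * (1 + u) = z * u) (hw : w * u = 1) : y * (1 + w) = z := by
  have hu₀ : u ≠ 0 := right_ne_zero_of_mul_eq_one hw
  apply mul_right_cancel₀ (mul_ne_zero hu₀ hu)
  linear_combination (1 + w) * u * hy + z * u * hw

section NestAux

variable {F : Type*} [Field F] {m : ℕ} {x : ℕ → ℤ → F}

lemma nestAux_succ_of_mutation (hx₁' : ∀ j : ℤ, 1 + x 1 j ≠ 0)
    (hmutB : ∀ j : ℤ, x m (j + 1) * (1 + x 1 j) = x (m + 1) j * x 1 j)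
    (hmutC : ∀ j : ℤ, x (m + 1) (j + 1) * x 1 j = 1)
    (hmutD : ∀ j : ℤ, ∀ i : ℕ, 2 ≤ i → i ≤ m - 1 → x i (j + 1) = x (i + 1) j)
    (j : ℤ) {k : ℕ} (hk : k + 1 ≤ m - 1) :
    nestAux x m (j + 1) (k + 1) = nestAux x m j k := by
  induction k with
  | zero => exact mul_one_add_eq_of_mul_eq (hx₁' j) (hmutB j) (hmutC j)
  | succ k ih =>
    have hD : x (m - (k + 1)) (j + 1) = x (m - k) j := by
      rw [hmutD j _ (by omega) (by omega), show m - (k + 1) + 1 = m - k by omega]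
    simp only [nestAux] at ih ⊢
    rw [ih (by omega), hD]

lemma nestAux_add_self (hx₁' : ∀ j : ℤ, 1 + x 1 j ≠ 0)
    (hmutB : ∀ j : ℤ, x m (j + 1) * (1 + x 1 j) = x (m + 1) j * x 1 j)
    (hmutC : ∀ j : ℤ, x (m + 1) (j + 1) * x 1 j = 1)
    (hmutD : ∀ j : ℤ, ∀ i : ℕ, 2 ≤ i → i ≤ m - 1 → x i (j + 1) = x (i + 1) j)
    (j : ℤ) {r : ℕ} (hr : r ≤ m - 1) :
    nestAux x m (j + r) r = x (m + 1) j := by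
  induction r with
  | zero => simp [nestAux]
  | succ r ih =>
    rw [Nat.cast_succ, ← add_assoc,
      nestAux_succ_of_mutation hx₁' hmutB hmutC hmutD _ hr, ih (by omega)]

end NestAux

theorem am1_nested_inverse_general {F : Type*} [Field F] (m : ℕ) (hm : 2 ≤ m)
    (x : ℕ → ℤ → F)
    (hx₁' : ∀ j : ℤ, 1 + x 1 j ≠ 0)
    (hmutB : ∀ j : ℤ, x m (j + 1) * (1 + x 1 j) = x (m + 1) j * x 1 j)
    (hmutC : ∀ j : ℤ, x (m + 1) (j + 1) * x 1 j = 1)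
    (hmutD : ∀ j : ℤ, ∀ i : ℕ, 2 ≤ i → i ≤ m - 1 → x i (j + 1) = x (i + 1) j) :
    ∀ j : ℤ, x 1 j * nestAux x m (j + m) (m - 1) = 1 := by
  intro j
  have hshift : j + m = j + 1 + ((m - 1 : ℕ) : ℤ) := by
    push_cast [Nat.cast_sub (by omega : 1 ≤ m)]
    ring
  rw [hshift, nestAux_add_self hx₁' hmutB hmutC hmutD (j + 1) le_rfl, mul_comm]
  exact hmutC j

/-- Along an `A_m⁽¹⁾` X-variable sequence, the nested expression reproduces the inverse of
the first X-variable `m` steps earlier: `N(j+m) = x₁(j)⁻¹`. -/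
theorem am1_nested_inverse {F : Type*} [Field F] (m : ℕ) (hm : 2 ≤ m)
    (x : ℕ → ℤ → F)
    (hx₁ : ∀ j : ℤ, x 1 j ≠ 0) (hx₁' : ∀ j : ℤ, 1 + x 1 j ≠ 0)
    (hmutA : ∀ j : ℤ, x 1 (j + 1) * (1 + x 1 j) = x 2 j * x 1 j)
    (hmutB : ∀ j : ℤ, x m (j + 1) * (1 + x 1 j) = x (m + 1) j * x 1 j)
    (hmutC : ∀ j : ℤ, x (m + 1) (j + 1) * x 1 j = 1)
    (hmutD : ∀ j : ℤ, ∀ i : ℕ, 2 ≤ i → i ≤ m - 1 → x i (j + 1) = x (i + 1) j) :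
    ∀ j : ℤ, x 1 j * nestAux x m (j + m) (m - 1) = 1 :=
  am1_nested_inverse_general m hm x hx₁' hmutB hmutC hmutD
end

section
/- Linearization of the A_m⁽¹⁾ mutation recurrence: let x₁, …, x_{m+1} be an A_m⁽¹⁾ X-variable sequence, t : ℤ → F a sequence of nonzero elements, and A : ℤ → F a sequence of nonzero elements satisfying A(j+m+1)·A(j)·t(j) = A(j+1)·A(j+m)·(1 + x₁(j)) for all j ∈ ℤ. Let γ : ℤ → F satisfy γ(0) = 1 and γ(j+1)·t(j) = γ(j) for all j ∈ ℤ, and put r(j) := A(j+m)/(γ(j)·A(j)), β₀ := A(m)/A(0), K₁ := 1 + x₁(0)·(1 + x₂(0)·(1 + ⋯ x_m(0)·(1 + x_{m+1}(0))⋯)), and K₂ := r(1−m)·x₁(0)·N(0)/β₀. Then for all j ∈ ℤ: γ(j)⁻¹·γ(j+m)⁻¹·A(j+2m) − β₀·K₁·γ(j)⁻¹·A(j+m) + β₀²·K₂·A(j) = 0. -/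
/-!
Put `r(j) = A(j+m)/(γ(j)A(j))`; the exchange relation for `A` and the definition of `γ` turn into
the first-order recursion `r(j+1) = r(j)(1 + x₁(j))`, and the claim becomes the quadratic relation
`r(j+m)r(j) - β₀K₁r(j) + β₀²K₂ = 0`. Along the mutation sequence the quantity
`r(j+m)r(j+1)x₁(j+m)/x₁(j)` is conserved, and given this, the left side `T(j)` of the quadratic
relation satisfies `T(j+1) = (1 + x₁(j))T(j)`. The constants are chosen so that the conserved
quantity equals `β₀²K₂` and `T(1-m) = 0`; the closed form `N(0) = 1/x₁(-m)` of the nested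
expression is what identifies them.
-/

theorem Int.eq_zero_iff_of_succ_mul_eq_mul {M₀ : Type*} [MonoidWithZero M₀] [NoZeroDivisors M₀]
    {f a b : ℤ → M₀} (ha : ∀ j, a j ≠ 0) (hb : ∀ j, b j ≠ 0)
    (h : ∀ j, f (j + 1) * a j = f j * b j) (i j : ℤ) : f i = 0 ↔ f j = 0 := by
  have step : ∀ k, f (k + 1) = 0 ↔ f k = 0 := fun k => by
    rw [← mul_eq_zero_iff_right (ha k), h k, mul_eq_zero_iff_right (hb k)]
  induction i using Int.inductionOn' (b := j) with
  | zero => rfl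
  | succ k _ ih => exact (step k).trans ih
  | pred k _ ih => rw [← sub_add_cancel k 1] at ih; exact (step _).symm.trans ih

namespace Am1

variable {F : Type*} {m : ℕ} {x : ℕ → ℤ → F}

theorem x_add_eq (hmutD : ∀ j : ℤ, ∀ i : ℕ, 2 ≤ i → i ≤ m - 1 → x i (j + 1) = x (i + 1) j)
    (k : ℕ) {a : ℕ} (ha : 2 ≤ a) (hak : a + k ≤ m) (j : ℤ) : x a (j + k) = x (a + k) j := by
  induction k generalizing j with
  | zero => simp
  | succ k ih =>
    rw [Nat.cast_succ, add_comm (k : ℤ), ← add_assoc, ih (by omega), hmutD j (a + k) (by omega)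
      (by omega), add_assoc]

theorem x_two_add_m (hm : 2 ≤ m)
    (hmutD : ∀ j : ℤ, ∀ i : ℕ, 2 ≤ i → i ≤ m - 1 → x i (j + 1) = x (i + 1) j) (j : ℤ) :
    x 2 (j + m) = x m (j + 2) := by
  have h := x_add_eq hmutD (m - 2) le_rfl (by omega) (j + 2)
  rwa [Nat.add_sub_cancel' hm, show j + 2 + ((m - 2 : ℕ) : ℤ) = j + m by omega] at h

variable [Field F]

theorem nestAux_eq (hx₁ : ∀ j : ℤ, x 1 j ≠ 0)
    (hmutB : ∀ j : ℤ, x m (j + 1) * (1 + x 1 j) = x (m + 1) j * x 1 j)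
    (hmutC : ∀ j : ℤ, x (m + 1) (j + 1) * x 1 j = 1)
    (hmutD : ∀ j : ℤ, ∀ i : ℕ, 2 ≤ i → i ≤ m - 1 → x i (j + 1) = x (i + 1) j)
    (j : ℤ) {k : ℕ} (hk : k ≤ m - 1) : nestAux x m j k = x (m + 1) (j - k) := by
  induction k with
  | zero => simp [nestAux]
  | succ k ih =>
    have hxm : x (m - k) j = x m (j - k) := by
      simpa [Nat.sub_add_cancel (by omega : k ≤ m)] using
        x_add_eq hmutD k (a := m - k) (by omega) (by omega) (j - k)
    have hB := hmutB (j - k - 1)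
    have hC := hmutC (j - k - 1)
    rw [sub_add_cancel] at hB hC
    rw [nestAux, ih (by omega), hxm, Nat.cast_succ, ← sub_sub]
    apply mul_right_cancel₀ (hx₁ (j - k - 1))
    linear_combination hB + x m (j - k) * hC

theorem nestAux_mul_x_one (hm : 1 ≤ m) (hx₁ : ∀ j : ℤ, x 1 j ≠ 0)
    (hmutB : ∀ j : ℤ, x m (j + 1) * (1 + x 1 j) = x (m + 1) j * x 1 j)
    (hmutC : ∀ j : ℤ, x (m + 1) (j + 1) * x 1 j = 1)
    (hmutD : ∀ j : ℤ, ∀ i : ℕ, 2 ≤ i → i ≤ m - 1 → x i (j + 1) = x (i + 1) j) (j : ℤ) :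
    nestAux x m j (m - 1) * x 1 (j - m) = 1 := by
  rw [nestAux_eq hx₁ hmutB hmutC hmutD j le_rfl, show j - ((m - 1 : ℕ) : ℤ) = j - m + 1 by omega]
  exact hmutC (j - m)

variable {r : ℤ → F}

theorem conserved_step (hm : 2 ≤ m)
    (hmutA : ∀ j : ℤ, x 1 (j + 1) * (1 + x 1 j) = x 2 j * x 1 j)
    (hmutB : ∀ j : ℤ, x m (j + 1) * (1 + x 1 j) = x (m + 1) j * x 1 j)
    (hmutC : ∀ j : ℤ, x (m + 1) (j + 1) * x 1 j = 1)
    (hmutD : ∀ j : ℤ, ∀ i : ℕ, 2 ≤ i → i ≤ m - 1 → x i (j + 1) = x (i + 1) j)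
    (hr : ∀ j, r (j + 1) = r j * (1 + x 1 j)) (j : ℤ) :
    r (j + 1 + m) * r (j + 1 + 1) * x 1 (j + 1 + m) * x 1 j
      = r (j + m) * r (j + 1) * x 1 (j + m) * x 1 (j + 1) := by
  rw [add_right_comm j 1, hr (j + m), hr (j + 1)]
  have hA := hmutA (j + m)
  have hB := hmutB (j + 1)
  rw [x_two_add_m hm hmutD] at hA
  rw [add_assoc, one_add_one_eq_two] at hB
  linear_combination (r (j + m) * r (j + 1) * (1 + x 1 (j + 1)) * x 1 j) * hA
    + (r (j + m) * r (j + 1) * x 1 (j + m) * x 1 j) * hB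
    + (r (j + m) * r (j + 1) * x 1 (j + m) * x 1 (j + 1)) * hmutC j

theorem conserved_eq (hm : 2 ≤ m) (hx₁ : ∀ j : ℤ, x 1 j ≠ 0)
    (hmutA : ∀ j : ℤ, x 1 (j + 1) * (1 + x 1 j) = x 2 j * x 1 j)
    (hmutB : ∀ j : ℤ, x m (j + 1) * (1 + x 1 j) = x (m + 1) j * x 1 j)
    (hmutC : ∀ j : ℤ, x (m + 1) (j + 1) * x 1 j = 1)
    (hmutD : ∀ j : ℤ, ∀ i : ℕ, 2 ≤ i → i ≤ m - 1 → x i (j + 1) = x (i + 1) j)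
    (hr : ∀ j, r (j + 1) = r j * (1 + x 1 j)) (j : ℤ) :
    r (j + m) * r (j + 1) * x 1 (j + m)
      = r 0 * r (1 - m) * x 1 0 * nestAux x m 0 (m - 1) * x 1 j := by
  set c := r 0 * r (1 - m) * x 1 0 * nestAux x m 0 (m - 1)
  have hN := nestAux_mul_x_one (by omega) hx₁ hmutB hmutC hmutD 0
  have hzero := Int.eq_zero_iff_of_succ_mul_eq_mul
    (f := fun j => r (j + m) * r (j + 1) * x 1 (j + m) - c * x 1 j) hx₁ (fun j => hx₁ (j + 1))
    (fun j => by linear_combination conserved_step hm hmutA hmutB hmutC hmutD hr j) j (-m)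
  refine sub_eq_zero.1 (hzero.2 ?_)
  rw [neg_add_cancel, neg_add_eq_sub, ← zero_sub]
  linear_combination (-(r 0 * r (1 - m) * x 1 0)) * hN

theorem quadratic_relation (hm : 2 ≤ m) (hx₁ : ∀ j : ℤ, x 1 j ≠ 0)
    (hx₁' : ∀ j : ℤ, 1 + x 1 j ≠ 0)
    (hmutA : ∀ j : ℤ, x 1 (j + 1) * (1 + x 1 j) = x 2 j * x 1 j)
    (hmutB : ∀ j : ℤ, x m (j + 1) * (1 + x 1 j) = x (m + 1) j * x 1 j)
    (hmutC : ∀ j : ℤ, x (m + 1) (j + 1) * x 1 j = 1)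
    (hmutD : ∀ j : ℤ, ∀ i : ℕ, 2 ≤ i → i ≤ m - 1 → x i (j + 1) = x (i + 1) j)
    (hr : ∀ j, r (j + 1) = r j * (1 + x 1 j)) (j : ℤ) :
    r (j + m) * r j - r 0 * (1 + x 1 0 * (1 + nestAux x m 0 (m - 1))) * r j
      + r 0 * r (1 - m) * x 1 0 * nestAux x m 0 (m - 1) = 0 := by
  set N := nestAux x m 0 (m - 1)
  have hzero := Int.eq_zero_iff_of_succ_mul_eq_mul
    (f := fun j => r (j + m) * r j - r 0 * (1 + x 1 0 * (1 + N)) * r j + r 0 * r (1 - m) * x 1 0 * N)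
    (fun _ => one_ne_zero) hx₁'
    (fun j => by
      rw [add_right_comm, hr (j + m), hr j]
      linear_combination conserved_eq hm hx₁ hmutA hmutB hmutC hmutD hr j
        - r (j + m) * x 1 (j + m) * hr j) j (1 - m)
  refine hzero.2 ?_
  rw [sub_add_cancel, show (1 : ℤ) = 0 + 1 from (zero_add 1).symm, hr 0, zero_add]
  ring

theorem ratio_succ {t A γ : ℤ → F}
    (hA : ∀ j : ℤ, A j ≠ 0) (hγ₀ : ∀ j : ℤ, γ j ≠ 0)
    (hArec : ∀ j : ℤ, A (j + m + 1) * A j * t j = A (j + 1) * A (j + m) * (1 + x 1 j))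
    (hγ : ∀ j : ℤ, γ (j + 1) * t j = γ j) (hrdef : ∀ j : ℤ, r j = A (j + m) / (γ j * A j))
    (j : ℤ) : r (j + 1) = r j * (1 + x 1 j) := by
  rw [hrdef, hrdef, add_right_comm]
  field_simp [hγ₀ (j + 1), hγ₀ j, hA (j + 1), hA j]
  linear_combination γ (j + 1) * hArec j - A (j + m + 1) * A j * hγ j

end Am1

/-- Linearization of the `A_m⁽¹⁾` mutation recurrence. -/
theorem am1_linearization {F : Type*} [Field F] (m : ℕ) (hm : 2 ≤ m)
    (x : ℕ → ℤ → F)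
    (hx₁ : ∀ j : ℤ, x 1 j ≠ 0) (hx₁' : ∀ j : ℤ, 1 + x 1 j ≠ 0)
    (hmutA : ∀ j : ℤ, x 1 (j + 1) * (1 + x 1 j) = x 2 j * x 1 j)
    (hmutB : ∀ j : ℤ, x m (j + 1) * (1 + x 1 j) = x (m + 1) j * x 1 j)
    (hmutC : ∀ j : ℤ, x (m + 1) (j + 1) * x 1 j = 1)
    (hmutD : ∀ j : ℤ, ∀ i : ℕ, 2 ≤ i → i ≤ m - 1 → x i (j + 1) = x (i + 1) j)
    (t : ℤ → F) (ht : ∀ j : ℤ, t j ≠ 0)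
    (A : ℤ → F) (hA : ∀ j : ℤ, A j ≠ 0)
    (hArec : ∀ j : ℤ, A (j + m + 1) * A j * t j = A (j + 1) * A (j + m) * (1 + x 1 j))
    (γ : ℤ → F) (hγ0 : γ 0 = 1) (hγ : ∀ j : ℤ, γ (j + 1) * t j = γ j)
    (r : ℤ → F) (hrdef : ∀ j : ℤ, r j = A (j + m) / (γ j * A j))
    (β₀ K₁ K₂ : F) (hβ₀ : β₀ = A m / A 0)
    (hK₁ : K₁ = 1 + x 1 0 * (1 + nestAux x m 0 (m - 1)))
    (hK₂ : K₂ = r (1 - m) * x 1 0 * nestAux x m 0 (m - 1) / β₀) :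
    ∀ j : ℤ, (γ j)⁻¹ * (γ (j + m))⁻¹ * A (j + 2 * m)
        - β₀ * K₁ * (γ j)⁻¹ * A (j + m) + β₀ ^ 2 * K₂ * A j = 0 := by
  have hγ₀ : ∀ j, γ j ≠ 0 := fun j hj => one_ne_zero <| hγ0 ▸
    (Int.eq_zero_iff_of_succ_mul_eq_mul ht (fun _ => one_ne_zero)
      (fun j => (hγ j).trans (mul_one _).symm) j 0).1 hj
  have hr := Am1.ratio_succ hA hγ₀ hArec hγ hrdef
  have hr0 : r 0 = β₀ := by rw [hrdef, hβ₀, hγ0, one_mul, zero_add]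
  have hβ₀ne : β₀ ≠ 0 := hβ₀ ▸ div_ne_zero (hA m) (hA 0)
  have hAm : ∀ j, A (j + m) = r j * γ j * A j := fun j => by
    rw [hrdef]; field_simp [hγ₀ j, hA j]
  intro j
  rw [two_mul, ← add_assoc, hAm (j + m), hAm j, hK₁, hK₂, ← hr0]
  field_simp [hγ₀ j, hγ₀ (j + m)]
  linear_combination A j * Am1.quadratic_relation hm hx₁ hx₁' hmutA hmutB hmutC hmutD hr j
end

section
/- Telescoping product identity for the A_m⁽¹⁾ mutation sequence: for every i with 1 ≤ i ≤ m, the product (1 + x₁(0))·(1 + x₁(1))⋯(1 + x₁(i−1)) equals the nested expression 1 + x₁(0)·(1 + x₂(0)·(1 + ⋯ x_{i−1}(0)·(1 + x_i(0))⋯)); for i = 1 this reads 1 + x₁(0) = 1 + x₁(0). Equivalently, the coefficient F_i in the initial conditions of the linearized recurrence equals K₁ − K_{i+1}, where K₁ = 1 + x₁(0)·(1 + x₂(0)·(⋯(1 + x_{m+1}(0))⋯)) and K_{i+1} = x₁(0)⋯x_{i+1}(0)·(1 + x_{i+2}(0)·(⋯(1 + x_{m+1}(0))⋯)). -/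
/-- The ascending nested expression with innermost variable `x_i(j)`:
`1 + topNest x j i (i-1)` is `1 + x₁(j)·(1 + x₂(j)·(1 + ⋯ x_{i-1}(j)·(1 + x_i(j))⋯))`. -/
def topNest {F : Type*} [Field F] (x : ℕ → ℤ → F) (j : ℤ) (i : ℕ) : ℕ → F
  | 0 => x i j
  | k + 1 => x (i - (k + 1)) j * (1 + topNest x j i k)


open Finset

/-! The mutations shift the variables `x₂, …, x_m` one step down per time step, so by the first
exchange relation `x₁(j)·(1 + x₁(0))⋯(1 + x₁(j−1)) = x₁(0)x₂(0)⋯x_{j+1}(0)` for `j < m`. Hence the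
product `(1 + x₁(0))⋯(1 + x₁(i−1))` is the `i`-th partial sum `1 + Σ_{s ≤ i} x₁(0)⋯x_s(0)`, which
is both the ascending nested expression and the difference of the two nested expressions `K₁`
and `K_{i+1}`. -/

section NestedSum

variable {R : Type*} [CommSemiring R] (y : ℕ → R)

/-- `1 + nestedSum y a b = 1 + y (a+1) * (1 + y (a+2) * (⋯ * (1 + y b)))`. -/
def nestedSum (a b : ℕ) : R :=
  ∑ s ∈ Ioc a b, ∏ q ∈ Ioc a s, y q

theorem nestedSum_eq_mul_one_add {a b : ℕ} (h : a < b) :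
    nestedSum y a b = y (a + 1) * (1 + nestedSum y (a + 1) b) := by
  have hprod : ∀ s ∈ Ioc (a + 1) b, ∏ q ∈ Ioc a s, y q = y (a + 1) * ∏ q ∈ Ioc (a + 1) s, y q :=
    fun s hs => by
      rw [← Icc_add_one_left_eq_Ioc, Icc_eq_cons_Ioc (mem_Ioc.1 hs).1.le, prod_cons]
  rw [nestedSum, nestedSum, ← Icc_add_one_left_eq_Ioc, Icc_eq_cons_Ioc h, sum_cons,
    sum_congr rfl hprod, ← mul_sum, Nat.Ioc_succ_singleton,
    prod_singleton, mul_one_add]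

theorem nestedSum_add_prod_mul {a c b : ℕ} (hac : a ≤ c) (hcb : c ≤ b) :
    nestedSum y a c + (∏ q ∈ Ioc a c, y q) * nestedSum y c b = nestedSum y a b := by
  have hprod : ∀ s ∈ Ioc c b, (∏ q ∈ Ioc a c, y q) * ∏ q ∈ Ioc c s, y q = ∏ q ∈ Ioc a s, y q :=
    fun s hs => prod_Ioc_consecutive y hac (mem_Ioc.1 hs).1.le
  rw [nestedSum, nestedSum, mul_sum, sum_congr rfl hprod, sum_Ioc_consecutive _ hac hcb,
    nestedSum]

end NestedSum

section NestedExpressions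

variable {F : Type*} [Field F] (x : ℕ → ℤ → F) (j : ℤ)

theorem nestAux_eq_nestedSum (m : ℕ) {k : ℕ} (hk : k ≤ m) :
    nestAux x m j k = nestedSum (x · j) (m - k) (m + 1) := by
  induction k with
  | zero => simp [nestAux, nestedSum, Nat.Ioc_succ_singleton]
  | succ k ih =>
    rw [nestAux, ih (by omega), nestedSum_eq_mul_one_add _ (a := m - (k + 1)) (by omega),
      show m - (k + 1) + 1 = m - k by omega]

theorem topNest_eq_nestedSum (i : ℕ) {k : ℕ} (hk : k < i) :
    topNest x j i k = nestedSum (x · j) (i - (k + 1)) i := by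
  induction k with
  | zero =>
    obtain ⟨n, rfl⟩ : ∃ n, i = n + 1 := ⟨i - 1, by omega⟩
    simp [topNest, nestedSum, Nat.Ioc_succ_singleton]
  | succ k ih =>
    rw [topNest, ih (by omega), nestedSum_eq_mul_one_add _ (a := i - (k + 1 + 1)) (by omega),
      show i - (k + 1 + 1) + 1 = i - (k + 1) by omega]

end NestedExpressions

theorem eq_initial_of_shift {α : Type*} {m : ℕ} {x : ℕ → ℤ → α}
    (hmutD : ∀ j : ℤ, ∀ i : ℕ, 2 ≤ i → i ≤ m - 1 → x i (j + 1) = x (i + 1) j) {i j : ℕ}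
    (hi : 2 ≤ i) (hij : i + j ≤ m) : x i j = x (i + j) 0 := by
  induction j generalizing i with
  | zero => simp
  | succ j ih =>
    rw [Nat.cast_succ, hmutD j i hi (by omega), ih (i := i + 1) (by omega) (by omega),
      Nat.add_right_comm, Nat.add_assoc]

section Mutation

variable {F : Type*} [Field F] {m : ℕ} {x : ℕ → ℤ → F}
variable (hmutA : ∀ j : ℤ, x 1 (j + 1) * (1 + x 1 j) = x 2 j * x 1 j)
  (hmutD : ∀ j : ℤ, ∀ i : ℕ, 2 ≤ i → i ≤ m - 1 → x i (j + 1) = x (i + 1) j)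
include hmutA hmutD

theorem x_one_mul_prod_range_one_add {j : ℕ} (hj : j + 1 ≤ m) :
    x 1 j * ∏ l ∈ range j, (1 + x 1 l) = ∏ q ∈ Ioc 0 (j + 1), x q 0 := by
  induction j with
  | zero => simp [Nat.Ioc_succ_singleton]
  | succ j ih =>
    calc x 1 ↑(j + 1) * ∏ l ∈ range (j + 1), (1 + x 1 l)
        = x 2 j * (x 1 j * ∏ l ∈ range j, (1 + x 1 l)) := by
          rw [prod_range_succ, Nat.cast_succ, ← mul_assoc, mul_right_comm, hmutA]; ring
      _ = ∏ q ∈ Ioc 0 (j + 1 + 1), x q 0 := by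
          rw [ih (by omega), eq_initial_of_shift hmutD le_rfl (by omega : 2 + j ≤ m),
            prod_Ioc_succ_top (Nat.zero_le (j + 1)), mul_comm, Nat.add_comm 2 j]

theorem prod_range_one_add_eq_one_add_nestedSum {i : ℕ} (hi : i ≤ m) :
    ∏ l ∈ range i, (1 + x 1 l) = 1 + nestedSum (x · 0) 0 i := by
  induction i with
  | zero => simp [nestedSum]
  | succ i ih =>
    rw [prod_range_succ, mul_one_add, mul_comm, x_one_mul_prod_range_one_add hmutA hmutD hi,
      ih (by omega), nestedSum, nestedSum, sum_Ioc_succ_top (Nat.zero_le _), add_assoc]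

end Mutation

theorem am1_telescoping_product_general {F : Type*} [Field F] (m : ℕ)
    (x : ℕ → ℤ → F)
    (hmutA : ∀ j : ℤ, x 1 (j + 1) * (1 + x 1 j) = x 2 j * x 1 j)
    (hmutD : ∀ j : ℤ, ∀ i : ℕ, 2 ≤ i → i ≤ m - 1 → x i (j + 1) = x (i + 1) j) :
    ∀ i : ℕ, 1 ≤ i → i ≤ m →
      (∏ l ∈ Finset.range i, (1 + x 1 (l : ℤ))) = 1 + topNest x 0 i (i - 1) ∧
      (∏ l ∈ Finset.range i, (1 + x 1 (l : ℤ)))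
        = (1 + x 1 0 * (1 + nestAux x m 0 (m - 1)))
          - (∏ q ∈ Finset.Icc 1 i, x q 0) * nestAux x m 0 (m - i) := by
  intro i hi him
  have hprod := prod_range_one_add_eq_one_add_nestedSum hmutA hmutD him
  refine ⟨?_, ?_⟩
  · rw [hprod, topNest_eq_nestedSum x 0 i (by omega), Nat.sub_add_cancel hi, Nat.sub_self]
  · have hsplit := nestedSum_add_prod_mul (x · 0) (Nat.zero_le i) (by omega : i ≤ m + 1)
    have hfirst : nestedSum (x · 0) 0 (m + 1) = x 1 0 * (1 + nestedSum (x · 0) 1 (m + 1)) :=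
      nestedSum_eq_mul_one_add _ m.succ_pos
    have hIcc : Icc 1 i = Ioc 0 i := Icc_add_one_left_eq_Ioc 0 i
    rw [hprod, nestAux_eq_nestedSum x 0 m (by omega), nestAux_eq_nestedSum x 0 m (by omega),
      Nat.sub_sub_self (by omega), Nat.sub_sub_self him, hIcc]
    linear_combination hsplit + hfirst

/-- Telescoping product identity for the `A_m⁽¹⁾` mutation sequence: the product
`(1 + x₁(0))⋯(1 + x₁(i−1))` equals the nested expression
`1 + x₁(0)·(1 + x₂(0)·(⋯(1 + x_i(0))⋯))`, and equivalently equals `K₁ − K_{i+1}`. -/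
theorem am1_telescoping_product {F : Type*} [Field F] (m : ℕ) (hm : 2 ≤ m)
    (x : ℕ → ℤ → F)
    (hx₁ : ∀ j : ℤ, x 1 j ≠ 0) (hx₁' : ∀ j : ℤ, 1 + x 1 j ≠ 0)
    (hmutA : ∀ j : ℤ, x 1 (j + 1) * (1 + x 1 j) = x 2 j * x 1 j)
    (hmutB : ∀ j : ℤ, x m (j + 1) * (1 + x 1 j) = x (m + 1) j * x 1 j)
    (hmutC : ∀ j : ℤ, x (m + 1) (j + 1) * x 1 j = 1)
    (hmutD : ∀ j : ℤ, ∀ i : ℕ, 2 ≤ i → i ≤ m - 1 → x i (j + 1) = x (i + 1) j) :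
    ∀ i : ℕ, 1 ≤ i → i ≤ m →
      (∏ l ∈ Finset.range i, (1 + x 1 (l : ℤ))) = 1 + topNest x 0 i (i - 1) ∧
      (∏ l ∈ Finset.range i, (1 + x 1 (l : ℤ)))
        = (1 + x 1 0 * (1 + nestAux x m 0 (m - 1)))
          - (∏ q ∈ Finset.Icc 1 i, x q 0) * nestAux x m 0 (m - i) :=
  am1_telescoping_product_general m x hmutA hmutD
end

section
/- Tropicalized coefficient dynamics of the A_m⁽¹⁾ sequence: let m ≥ 2 and let Y₁, …, Y_{m+1} : ℤ → ℤ satisfy, for all j ∈ ℤ: Y₁(j+1) = Y₂(j) + Y₁(j) − min(0, Y₁(j)); Y_m(j+1) = Y_{m+1}(j) + Y₁(j) − min(0, Y₁(j)); Y_{m+1}(j+1) = −Y₁(j); and Y_i(j+1) = Y_{i+1}(j) for 2 ≤ i ≤ m−1. Then the sequence c := Y₁ satisfies c(j+1) + c(j−m) = max(0, c(j)) + max(0, c(j−m+1)) for all j ∈ ℤ. -/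
/-!
The rules for `2 ≤ i ≤ m - 1` only pass `Y₂` down the indices, so `Y₂(j) = Y_m(j - m + 2)`.
Unfolding `Y_m` and then `Y_{m+1}` once more expresses `Y₂(j)` through `c(j - m)` and
`c(j - m + 1)`; substituting into the rule for `c(j + 1) = Y₁(j + 1)` gives the recurrence,
since `x - min 0 x = max 0 x`.
-/

theorem shift_iterate {α : Type*} {Y : ℕ → ℤ → α} {a b : ℕ}
    (h : ∀ j : ℤ, ∀ i, a ≤ i → i < b → Y i (j + 1) = Y (i + 1) j) :
    ∀ k : ℕ, a + k ≤ b → ∀ j : ℤ, Y a (j + k) = Y (a + k) j := by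
  intro k
  induction k with
  | zero => simp
  | succ k ih =>
    intro hk j
    calc Y a (j + ↑(k + 1)) = Y a (j + 1 + k) := by congr 1; push_cast; ring
      _ = Y (a + k) (j + 1) := ih (by omega) (j + 1)
      _ = Y (a + (k + 1)) j := h j (a + k) (by omega) (by omega)

/-- Tropicalized coefficient dynamics of the `A_m⁽¹⁾` sequence: the exponent sequence
`c = Y₁` of each frozen variable satisfies the tropical coefficient recurrence. -/
theorem am1_tropical_coeff_recurrence (m : ℕ) (hm : 2 ≤ m) (Y : ℕ → ℤ → ℤ)
    (h1 : ∀ j : ℤ, Y 1 (j + 1) = Y 2 j + Y 1 j - min 0 (Y 1 j))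
    (h2 : ∀ j : ℤ, Y m (j + 1) = Y (m + 1) j + Y 1 j - min 0 (Y 1 j))
    (h3 : ∀ j : ℤ, Y (m + 1) (j + 1) = -(Y 1 j))
    (h4 : ∀ j : ℤ, ∀ i : ℕ, 2 ≤ i → i ≤ m - 1 → Y i (j + 1) = Y (i + 1) j) :
    ∀ j : ℤ, Y 1 (j + 1) + Y 1 (j - m) = max 0 (Y 1 j) + max 0 (Y 1 (j - m + 1)) := by
  intro j
  obtain ⟨n, rfl⟩ : ∃ n, j = n + m := ⟨j - m, by ring⟩
  simp only [add_sub_cancel_right]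
  have hY2 : Y 2 (n + m) = Y m (n + 1 + 1) := by
    have hshift : ∀ j : ℤ, ∀ i, 2 ≤ i → i < m → Y i (j + 1) = Y (i + 1) j :=
      fun j i hi hib => h4 j i hi (by omega)
    convert shift_iterate hshift (m - 2) (by omega) (n + 1 + 1) using 2 <;> omega
  have hYm := h2 (n + 1)
  rw [h3 n] at hYm
  have hc := h1 (n + m)
  omega
end

section
/- Tropical mutation rule for the prefactor γ: let m ≥ 1 and let c : ℤ → ℤ satisfy c(j+1) + c(j−m) = max(0, c(j)) + max(0, c(j−m+1)) for all j ∈ ℤ. Define G(j) := min(0, min(c(j), c(j) − c(j−m))). Then for all j ∈ ℤ: G(j+1) = G(j) − min(0, c(j)). -/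
/-! The identity only involves the four values `a = c j`, `b = c (j - m)`, `a' = c (j + 1)`,
`b' = c (j + 1 - m)`, tied by the exchange relation `a' + b = max 0 a + max 0 b'`. Since
`min 0 (min x (x - y)) = x - max (max 0 x) y`, it suffices to compare the maxima, and the
exchange relation turns `max (max 0 a') b'` into `max 0 b' - b + max (max 0 a) b`. -/

section LinearOrderedAddCommGroup

variable {α : Type*} [AddCommGroup α] [LinearOrder α] [IsOrderedAddMonoid α]

theorem min_zero_min_self_sub (x y : α) : min 0 (min x (x - y)) = x - max (max 0 x) y := by
  rw [max_comm 0 x, max_assoc, ← min_sub_sub_left, ← min_sub_sub_left, sub_self, sub_zero]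

theorem min_zero_min_sub_eq_sub_min_zero_of_add_eq {a b a' b' : α}
    (h : a' + b = max 0 a + max 0 b') :
    min 0 (min a' (a' - b')) = min 0 (min a (a - b)) - min 0 a := by
  have ha' : a' = max 0 b' - b + max 0 a := by rw [eq_sub_of_add_eq h]; abel
  have hmax : max (max 0 a') b' = max 0 b' - b + max (max 0 a) b :=
    calc max (max 0 a') b' = max (max 0 b' - b + max 0 a) (max 0 b' - b + b) := by
          rw [sub_add_cancel, ← ha', max_comm 0 a', max_assoc]
      _ = max 0 b' - b + max (max 0 a) b := max_add_add_left ..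
  have hpos : a - min 0 a = max 0 a := by
    rw [sub_eq_iff_eq_add', min_add_max, zero_add]
  rw [min_zero_min_self_sub, min_zero_min_self_sub, hmax, sub_right_comm, hpos, ha']
  abel

end LinearOrderedAddCommGroup

theorem am1_tropical_prefactor_mutation_general (m : ℕ) (c : ℤ → ℤ)
    (hrec : ∀ j : ℤ, c (j + 1) + c (j - m) = max 0 (c j) + max 0 (c (j - m + 1))) :
    ∀ j : ℤ, min 0 (min (c (j + 1)) (c (j + 1) - c (j + 1 - m)))
      = min 0 (min (c j) (c j - c (j - m))) - min 0 (c j) := by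
  intro j
  apply min_zero_min_sub_eq_sub_min_zero_of_add_eq
  rw [hrec j, sub_add_eq_add_sub]

/-- Tropical mutation rule for the prefactor `γ`: with
`G(j) = min(0, min(c(j), c(j) − c(j−m)))` the exponent of a frozen variable in
`γⱼ = 1 ⊕̂ y₁;ⱼ ⊕̂ y₁;ⱼ·(y₁;ⱼ₋ₘ)⁻¹`, one has `G(j+1) = G(j) − min(0, c(j))`. -/
theorem am1_tropical_prefactor_mutation (m : ℕ) (hm : 1 ≤ m) (c : ℤ → ℤ)
    (hrec : ∀ j : ℤ, c (j + 1) + c (j - m) = max 0 (c j) + max 0 (c (j - m + 1))) :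
    ∀ j : ℤ, min 0 (min (c (j + 1)) (c (j + 1) - c (j + 1 - m)))
      = min 0 (min (c j) (c j - c (j - m))) - min 0 (c j) :=
  am1_tropical_prefactor_mutation_general m c hrec
end

section
/- The additional non-rational letter f₁₀ of the eight-particle scattering-diagram alphabet is a rational multiple of the square root: with the asymptotic-chamber cone variables x_{γ₁}⁰, x_{γ₉}⁰, x_{γ₅}⁰ defined below, one has x_{γ₅}⁰·(1 − x_{γ₁}⁰·x_{γ₉}⁰) = x₅·s, i.e. f₁₀ = x₅·√Δ′. -/
/-!
Write `a = 1 + x₁(1 + x₉)` and `u = x₁x₉`, so that `Δ′ = a² − 4u` and `s` is a square root of the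
discriminant of `t² − a t + u`. Its roots `p = (a + s)/2` and `q = (a − s)/2` satisfy `p q = u` and
`p − q = s`, and in terms of them `x_{γ₅}⁰ = x₅ p`, `1 + x₁ − x₁x₉ + s = 2p(1 − q)` and
`1 + (1 − x₁(1 + x₉))/s = 2(1 − q)/s`. Hence `x_{γ₁}⁰ x_{γ₉}⁰ = u/p² = q/p`, and
`x_{γ₅}⁰ (1 − x_{γ₁}⁰ x_{γ₉}⁰) = x₅ (p − q) = x₅ s`.
-/

section

variable {F : Type*} [Field F]

theorem exists_add_sub_mul_eq_of_sq_eq {a u s : F} (h2 : (2 : F) ≠ 0)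
    (hs : s ^ 2 = a ^ 2 - 4 * u) : ∃ p q : F, a = p + q ∧ s = p - q ∧ u = p * q := by
  refine ⟨(a + s) / 2, (a - s) / 2, by field_simp; ring, by field_simp; ring, ?_⟩
  field_simp
  linear_combination hs

theorem cone_mul_cone_eq_div {x₁ x₉ p q s : F} (hpq : x₁ * x₉ = p * q) (h2 : (2 : F) ≠ 0)
    (hs : s ≠ 0) (hp : p ≠ 0) (hq : 1 - q ≠ 0) :
    4 * x₁ * s ^ 2 / (2 * p * (1 - q)) ^ 2 * (x₉ / 4 * (2 * (1 - q) / s) ^ 2) = q / p := by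
  have h4 : (4 : F) ≠ 0 := by
    rw [show (4 : F) = 2 ^ 2 by norm_num]; exact pow_ne_zero 2 h2
  field_simp
  linear_combination hpq

end

/-- The additional non-rational letter `f₁₀` of the eight-particle scattering-diagram
alphabet is a rational multiple of the square root: `f₁₀ = x₅·√Δ′`. -/
theorem octagon_f10_letter {F : Type*} [Field F] (x₁ x₅ x₉ : F)
    (Δ' : F) (hΔ : Δ' = (1 + x₁ * (1 + x₉)) ^ 2 - 4 * x₁ * x₉)
    (s : F) (hs : s ≠ 0) (hs2 : s ^ 2 = Δ')
    (hden : 1 + x₁ - x₁ * x₉ + s ≠ 0)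
    (xg1 xg9 xg5 : F)
    (hxg1 : xg1 = 4 * x₁ * Δ' / (1 + x₁ - x₁ * x₉ + s) ^ 2)
    (hxg9 : xg9 = x₉ / 4 * (1 + (1 - x₁ * (1 + x₉)) / s) ^ 2)
    (hxg5 : xg5 = x₅ / 2 * (1 + x₁ * (1 + x₉) + s)) :
    xg5 * (1 - xg1 * xg9) = x₅ * s := by
  subst hΔ hxg1 hxg9 hxg5
  -- In characteristic 2 the denominator would be a square root of `2 · (…) = 0`.
  have h2 : (2 : F) ≠ 0 := fun h2 ↦ hden <| pow_eq_zero_iff two_ne_zero |>.mp <| by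
    linear_combination hs2 + ((1 + x₁) ^ 2 + x₁ ^ 2 * x₉ ^ 2 - 2 * x₁ * x₉
      + (1 + x₁ - x₁ * x₉) * s) * h2
  obtain ⟨p, q, hsum, hdiff, hpq⟩ :=
    exists_add_sub_mul_eq_of_sq_eq (a := 1 + x₁ * (1 + x₉)) (u := x₁ * x₉) (s := s) h2
      (by linear_combination hs2)
  have hden_eq : 1 + x₁ - x₁ * x₉ + s = 2 * p * (1 - q) := by
    linear_combination hsum + hdiff - 2 * hpq
  have hp : p ≠ 0 := by rintro hp; simp [hden_eq, hp] at hden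
  have hq : 1 - q ≠ 0 := by rintro hq; simp [hden_eq, hq] at hden
  have h9 : 1 + (1 - x₁ * (1 + x₉)) / s = 2 * (1 - q) / s := by
    field_simp; linear_combination hdiff - hsum
  rw [h9, hden_eq, ← hs2, cone_mul_cone_eq_div hpq h2 hs hp hq, hsum, hdiff]
  field_simp
  ring
end
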